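/- arXiv:2302.09969 — 4 statements merged into one kernel-verified Lean document; each statement's English description precedes it below -/
import Mathlib

section
/- Let f¹¹, f¹², f²¹, f²², G¹, G² : [0,T] × ℝ → ℝ be smooth functions, compactly supported in x uniformly in t, satisfying ∂_t f¹¹ + ∂_x f¹² = G¹ and ∂_t f²¹ - ∂_x f²² = G². Then there is a universal constant C > 0 such that ∫₀^T ∫_ℝ (f¹¹ f²² + f¹² f²¹) dx dt ≤ C · (‖f¹¹(0,·)‖_{L¹} + sup_{0≤t≤T} ‖f¹¹(t,·)‖_{L¹} + ∫₀^T ∫_ℝ |G¹| dx dt) · (‖f²¹(0,·)‖_{L¹} + sup_{0≤t≤T} ‖f²¹(t,·)‖_{L¹} + ∫₀^T ∫_ℝ |G²| dx dt). -/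
open MeasureTheory Set Metric

lemma aux_notmem {R x : ℝ} (hx : x ∉ Icc (-R) R) : R < |x| := by
  rw [lt_abs]
  rcases not_and_or.mp (fun hc => hx ⟨hc.1, hc.2⟩ : ¬ (-R ≤ x ∧ x ≤ R)) with h1 | h1
  · right; linarith [not_le.mp h1]
  · left; linarith [not_le.mp h1]

lemma aux_mem_ball_Icc {t t₀ : ℝ} (ht : t ∈ ball t₀ 1) : t ∈ Icc (t₀ - 1) (t₀ + 1) := by
  have : |t - t₀| < 1 := by simpa [Real.dist_eq] using mem_ball.mp ht
  constructor <;> [linarith [(abs_lt.mp this).1]; linarith [(abs_lt.mp this).2]]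

lemma aux_integrable {g : ℝ → ℝ} (hg : Continuous g) {R : ℝ}
    (h : ∀ x : ℝ, R < |x| → g x = 0) : Integrable g := by
  refine hg.integrable_of_hasCompactSupport ?_
  exact HasCompactSupport.intro (isCompact_Icc (a := -R) (b := R))
    fun x hx => h x (aux_notmem hx)

lemma aux_cont1 {f : ℝ → ℝ → ℝ} (hf : ContDiff ℝ (⊤ : ℕ∞) (fun p : ℝ × ℝ => f p.1 p.2)) (t : ℝ) :
    Continuous fun y => f t y :=
  hf.continuous.comp (continuous_const.prodMk continuous_id)

lemma aux_cont2 {f : ℝ → ℝ → ℝ} (hf : ContDiff ℝ (⊤ : ℕ∞) (fun p : ℝ × ℝ => f p.1 p.2)) (x : ℝ) :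
    Continuous fun s => f s x :=
  hf.continuous.comp (continuous_id.prodMk continuous_const)

lemma aux_hasDerivAt_t {f : ℝ → ℝ → ℝ} (hf : ContDiff ℝ (⊤ : ℕ∞) (fun p : ℝ × ℝ => f p.1 p.2))
    (t x : ℝ) : HasDerivAt (fun s => f s x) (deriv (fun s => f s x) t) t :=
  (((hf.differentiable (by simp)).comp
      ((differentiable_id.prodMk (differentiable_const x)))) t).hasDerivAt

lemma aux_hasDerivAt_x {f : ℝ → ℝ → ℝ} (hf : ContDiff ℝ (⊤ : ℕ∞) (fun p : ℝ × ℝ => f p.1 p.2))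
    (t x : ℝ) : HasDerivAt (fun y => f t y) (deriv (fun y => f t y) x) x :=
  (((hf.differentiable (by simp)).comp
      ((differentiable_const t).prodMk differentiable_id)) x).hasDerivAt

lemma aux_deriv_t_eq {f : ℝ → ℝ → ℝ} (hf : ContDiff ℝ (⊤ : ℕ∞) (fun p : ℝ × ℝ => f p.1 p.2))
    (t x : ℝ) : deriv (fun s => f s x) t
      = fderiv ℝ (fun p : ℝ × ℝ => f p.1 p.2) (t, x) (1, 0) := by
  have h1 : HasDerivAt (fun s : ℝ => (s, x)) ((1 : ℝ), (0 : ℝ)) t :=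
    (hasDerivAt_id t).prodMk (hasDerivAt_const t x)
  have h2 : HasFDerivAt (fun p : ℝ × ℝ => f p.1 p.2)
      (fderiv ℝ (fun p : ℝ × ℝ => f p.1 p.2) (t, x)) (t, x) :=
    ((hf.differentiable (by simp)) (t, x)).hasFDerivAt
  exact (h2.comp_hasDerivAt t h1).deriv

lemma aux_deriv_x_eq {f : ℝ → ℝ → ℝ} (hf : ContDiff ℝ (⊤ : ℕ∞) (fun p : ℝ × ℝ => f p.1 p.2))
    (t x : ℝ) : deriv (fun y => f t y) x
      = fderiv ℝ (fun p : ℝ × ℝ => f p.1 p.2) (t, x) (0, 1) := by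
  have h1 : HasDerivAt (fun y : ℝ => (t, y)) ((0 : ℝ), (1 : ℝ)) x :=
    (hasDerivAt_const x t).prodMk (hasDerivAt_id x)
  have h2 : HasFDerivAt (fun p : ℝ × ℝ => f p.1 p.2)
      (fderiv ℝ (fun p : ℝ × ℝ => f p.1 p.2) (t, x)) (t, x) :=
    ((hf.differentiable (by simp)) (t, x)).hasFDerivAt
  exact (h2.comp_hasDerivAt x h1).deriv

lemma aux_cont_deriv_t {f : ℝ → ℝ → ℝ} (hf : ContDiff ℝ (⊤ : ℕ∞) (fun p : ℝ × ℝ => f p.1 p.2)) :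
    Continuous fun p : ℝ × ℝ => deriv (fun s => f s p.2) p.1 := by
  have h : Continuous fun p : ℝ × ℝ =>
      fderiv ℝ (fun q : ℝ × ℝ => f q.1 q.2) p ((1 : ℝ), (0 : ℝ)) :=
    (hf.continuous_fderiv (by simp)).clm_apply continuous_const
  exact h.congr fun p => (aux_deriv_t_eq hf p.1 p.2).symm

lemma aux_cont_deriv_x {f : ℝ → ℝ → ℝ} (hf : ContDiff ℝ (⊤ : ℕ∞) (fun p : ℝ × ℝ => f p.1 p.2)) :
    Continuous fun p : ℝ × ℝ => deriv (fun y => f p.1 y) p.2 := by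
  have h : Continuous fun p : ℝ × ℝ =>
      fderiv ℝ (fun q : ℝ × ℝ => f q.1 q.2) p ((0 : ℝ), (1 : ℝ)) :=
    (hf.continuous_fderiv (by simp)).clm_apply continuous_const
  exact h.congr fun p => (aux_deriv_x_eq hf p.1 p.2).symm

lemma aux_deriv_zero {g : ℝ → ℝ} {R y : ℝ} (hy : R < |y|)
    (h : ∀ z : ℝ, R < |z| → g z = 0) : deriv g y = 0 := by
  have hopen : IsOpen {z : ℝ | R < |z|} := isOpen_lt continuous_const continuous_abs
  have hev : g =ᶠ[nhds y] fun _ => (0 : ℝ) :=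
    Filter.eventuallyEq_of_mem (hopen.mem_nhds hy) fun z hz => h z hz
  rw [hev.deriv_eq, deriv_const]

lemma aux_hasDerivAt_primitive {g : ℝ → ℝ} (hg : Continuous g) (hgi : Integrable g) (x : ℝ) :
    HasDerivAt (fun x => ∫ y in Iic x, g y) (g x) x := by
  have h0 : (fun z : ℝ => ∫ y in Iic z, g y)
      = fun z => (∫ y in Iic (0:ℝ), g y) + ∫ y in (0:ℝ)..z, g y := by
    funext z
    have := intervalIntegral.integral_Iic_sub_Iic (hgi.integrableOn (s := Iic (0:ℝ)))
      (hgi.integrableOn (s := Iic z))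
    linarith
  rw [h0]
  exact (intervalIntegral.integral_hasDerivAt_right (hgi.intervalIntegrable)
    (hg.stronglyMeasurableAtFilter _ _) hg.continuousAt).const_add _

lemma aux_bdd {g : ℝ → ℝ → ℝ} (hg : Continuous fun p : ℝ × ℝ => g p.1 p.2)
    (a b R : ℝ) : ∃ M : ℝ, 0 ≤ M ∧ ∀ t ∈ Icc a b, ∀ x ∈ Icc (-R) R, |g t x| ≤ M := by
  obtain ⟨M, hM⟩ := (isCompact_Icc.prod isCompact_Icc :
      IsCompact (Icc a b ×ˢ Icc (-R) R)).exists_bound_of_continuousOn hg.continuousOn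
  refine ⟨max M 0, le_max_right _ _, fun t ht x hx => ?_⟩
  exact le_trans (hM (t, x) ⟨ht, hx⟩) (le_max_left _ _)

lemma aux_bdd' {g : ℝ → ℝ → ℝ} (hg : Continuous fun p : ℝ × ℝ => g p.1 p.2) {R : ℝ}
    (hs : ∀ t x : ℝ, R < |x| → g t x = 0) (a b : ℝ) :
    ∃ M : ℝ, 0 ≤ M ∧ ∀ t ∈ Icc a b, ∀ x : ℝ, |g t x| ≤ M := by
  obtain ⟨M, hM0, hM⟩ := aux_bdd hg a b R
  refine ⟨M, hM0, fun t ht x => ?_⟩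
  by_cases hx : x ∈ Icc (-R) R
  · exact hM t ht x hx
  · rw [hs t x (aux_notmem hx), abs_zero]; exact hM0

lemma aux_hasDerivAt_setIntegral {f : ℝ → ℝ → ℝ}
    (hf : ContDiff ℝ (⊤ : ℕ∞) (fun p : ℝ × ℝ => f p.1 p.2)) {R : ℝ}
    (hs : ∀ t x : ℝ, R < |x| → f t x = 0) (s : Set ℝ) (t₀ : ℝ) :
    HasDerivAt (fun t => ∫ y in s, f t y)
      (∫ y in s, deriv (fun τ => f τ y) t₀) t₀ := by
  obtain ⟨M, hM0, hM⟩ := aux_bdd (g := fun t y => deriv (fun s => f s y) t)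
    (aux_cont_deriv_t hf) (t₀ - 1) (t₀ + 1) R
  refine (hasDerivAt_integral_of_dominated_loc_of_deriv_le (s := ball t₀ 1) (ball_mem_nhds t₀ one_pos)
    (F := fun t y => f t y) (F' := fun t y => deriv (fun τ => f τ y) t)
    (bound := (Icc (-R) R).indicator fun _ => M)
    (Filter.Eventually.of_forall fun t => ((aux_cont1 hf t).aestronglyMeasurable).restrict)
    ((aux_integrable (aux_cont1 hf t₀) (hs t₀)).restrict)
    ((((aux_cont_deriv_t hf).comp
        (continuous_const.prodMk continuous_id)).aestronglyMeasurable).restrict)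
    (Filter.Eventually.of_forall ?_) ?_ (Filter.Eventually.of_forall ?_)).2
  · intro y t ht
    by_cases hy : y ∈ Icc (-R) R
    · rw [indicator_of_mem hy, Real.norm_eq_abs]
      exact hM t (aux_mem_ball_Icc ht) y hy
    · have hzero : (fun τ => f τ y) = fun _ => (0 : ℝ) :=
        funext fun τ => hs τ y (aux_notmem hy)
      rw [indicator_of_notMem hy]
      simp only [hzero]
      simp
  · refine Integrable.restrict ?_
    rw [integrable_indicator_iff measurableSet_Icc]
    exact integrableOn_const measure_Icc_lt_top.ne
  · intro y t _
    exact aux_hasDerivAt_t hf t y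

lemma aux_intabs_le {g : ℝ → ℝ} {R M : ℝ} (hR : 0 < R)
    (h : ∀ x : ℝ, R < |x| → g x = 0) (hM : ∀ x : ℝ, |g x| ≤ M) :
    (∫ x : ℝ, |g x|) ≤ M * (2 * R) := by
  have h1 : (∫ x : ℝ, |g x|) = ∫ x in Icc (-R) R, |g x| :=
    (setIntegral_eq_integral_of_forall_compl_eq_zero fun x hx =>
      abs_eq_zero.2 (h x (aux_notmem hx))).symm
  rw [h1]
  calc ∫ x in Icc (-R) R, |g x| ≤ M * (volume (Icc (-R) R)).toReal := by
        refine le_trans (le_abs_self _) ?_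
        rw [← Real.norm_eq_abs (∫ x in Icc (-R) R, |g x|)]
        refine norm_setIntegral_le_of_norm_le_const measure_Icc_lt_top
          fun x _ => ?_
        rw [Real.norm_eq_abs, abs_abs]; exact hM x
    _ = M * (2 * R) := by
        rw [Real.volume_Icc, ENNReal.toReal_ofReal (by linarith)]
        ring_nf

lemma aux_abs_setIntegral_le {g : ℝ → ℝ} (hg : Integrable g) (s : Set ℝ) :
    |∫ y in s, g y| ≤ ∫ y : ℝ, |g y| := by
  calc |∫ y in s, g y| ≤ ∫ y in s, |g y| := by
        simpa [Real.norm_eq_abs] using norm_integral_le_integral_norm (μ := volume.restrict s) g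
    _ ≤ ∫ y : ℝ, |g y| :=
        setIntegral_le_integral hg.abs (Filter.Eventually.of_forall fun y => abs_nonneg _)

lemma aux_integral_Iic_deriv {f : ℝ → ℝ → ℝ}
    (hf : ContDiff ℝ (⊤ : ℕ∞) (fun p : ℝ × ℝ => f p.1 p.2)) {R : ℝ}
    (hs : ∀ t x : ℝ, R < |x| → f t x = 0) (t x : ℝ) :
    ∫ y in Iic x, deriv (fun y => f t y) y = f t x := by
  have h1 : ContDiff ℝ 1 (fun y => f t y) :=
    (hf.comp (contDiff_const.prodMk contDiff_id)).of_le (by simp)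
  have h2 : HasCompactSupport (fun y => f t y) :=
    HasCompactSupport.intro (isCompact_Icc (a := -R) (b := R))
      fun y hy => hs t y (aux_notmem hy)
  exact h2.integral_Iic_deriv_eq h1 x

lemma aux_cont_param {φ : ℝ → ℝ → ℝ} {R : ℝ}
    (hmeas : ∀ t, AEStronglyMeasurable (φ t) volume)
    (hsupp : ∀ t x : ℝ, R < |x| → φ t x = 0)
    (hloc : ∀ t₀ : ℝ, ∃ M, ∀ t ∈ ball t₀ 1, ∀ x, |φ t x| ≤ M)
    (hcont : ∀ x, Continuous fun t => φ t x) :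
    Continuous fun t => ∫ x : ℝ, φ t x := by
  rw [continuous_iff_continuousAt]; intro t₀
  obtain ⟨M, hM⟩ := hloc t₀
  refine continuousAt_of_dominated (bound := (Icc (-R) R).indicator fun _ => M)
    (Filter.Eventually.of_forall hmeas) ?_ ?_
    (Filter.Eventually.of_forall fun x => (hcont x).continuousAt)
  · filter_upwards [ball_mem_nhds t₀ one_pos] with t ht
    refine Filter.Eventually.of_forall fun x => ?_
    by_cases hx : x ∈ Icc (-R) R
    · rw [indicator_of_mem hx, Real.norm_eq_abs]; exact hM t ht x
    · rw [indicator_of_notMem hx, hsupp t x (aux_notmem hx)]; simp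
  · rw [integrable_indicator_iff measurableSet_Icc]
    exact integrableOn_const measure_Icc_lt_top.ne

lemma aux_hasDerivAt_integral {φ φ' : ℝ → ℝ → ℝ} {R : ℝ} (t₀ : ℝ)
    (hmeas : ∀ t, AEStronglyMeasurable (φ t) volume)
    (hmeas' : AEStronglyMeasurable (φ' t₀) volume)
    (hint : Integrable (φ t₀))
    (hsupp' : ∀ t x : ℝ, R < |x| → φ' t x = 0)
    (hM : ∃ M : ℝ, ∀ t ∈ ball t₀ 1, ∀ x, |φ' t x| ≤ M)
    (hdiff : ∀ x t, HasDerivAt (fun τ => φ τ x) (φ' t x) t) :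
    HasDerivAt (fun t => ∫ x : ℝ, φ t x) (∫ x : ℝ, φ' t₀ x) t₀ := by
  obtain ⟨M, hM⟩ := hM
  refine (hasDerivAt_integral_of_dominated_loc_of_deriv_le (s := ball t₀ 1) (ball_mem_nhds t₀ one_pos)
    (bound := (Icc (-R) R).indicator fun _ => M)
    (Filter.Eventually.of_forall hmeas) hint hmeas'
    (Filter.Eventually.of_forall ?_) ?_
    (Filter.Eventually.of_forall fun x t ht => hdiff x t)).2
  · intro x t ht
    by_cases hx : x ∈ Icc (-R) R
    · rw [indicator_of_mem hx, Real.norm_eq_abs]; exact hM t ht x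
    · rw [indicator_of_notMem hx, Real.norm_eq_abs, hsupp' t x (aux_notmem hx), abs_zero]
  · rw [integrable_indicator_iff measurableSet_Icc]
    exact integrableOn_const measure_Icc_lt_top.ne

theorem stmt_1 :
    ∃ C : ℝ, 0 < C ∧ ∀ (T : ℝ), 0 < T →
      ∀ (f11 f12 f21 f22 G1 G2 : ℝ → ℝ → ℝ),
      ContDiff ℝ (⊤ : ℕ∞) (fun p : ℝ × ℝ => f11 p.1 p.2) →
      ContDiff ℝ (⊤ : ℕ∞) (fun p : ℝ × ℝ => f12 p.1 p.2) →
      ContDiff ℝ (⊤ : ℕ∞) (fun p : ℝ × ℝ => f21 p.1 p.2) →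
      ContDiff ℝ (⊤ : ℕ∞) (fun p : ℝ × ℝ => f22 p.1 p.2) →
      ContDiff ℝ (⊤ : ℕ∞) (fun p : ℝ × ℝ => G1 p.1 p.2) →
      ContDiff ℝ (⊤ : ℕ∞) (fun p : ℝ × ℝ => G2 p.1 p.2) →
      (∃ R : ℝ, 0 < R ∧ ∀ t x : ℝ, R < |x| →
        f11 t x = 0 ∧ f12 t x = 0 ∧ f21 t x = 0 ∧ f22 t x = 0 ∧
        G1 t x = 0 ∧ G2 t x = 0) →
      (∀ t x : ℝ, deriv (fun s => f11 s x) t + deriv (fun y => f12 t y) x = G1 t x) →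
      (∀ t x : ℝ, deriv (fun s => f21 s x) t - deriv (fun y => f22 t y) x = G2 t x) →
      (∫ t in Set.Icc (0:ℝ) T, ∫ x : ℝ, (f11 t x * f22 t x + f12 t x * f21 t x)) ≤
        C * ((∫ x : ℝ, |f11 0 x|) + (⨆ t ∈ Set.Icc (0:ℝ) T, ∫ x : ℝ, |f11 t x|)
              + ∫ t in Set.Icc (0:ℝ) T, ∫ x : ℝ, |G1 t x|)
          * ((∫ x : ℝ, |f21 0 x|) + (⨆ t ∈ Set.Icc (0:ℝ) T, ∫ x : ℝ, |f21 t x|)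
              + ∫ t in Set.Icc (0:ℝ) T, ∫ x : ℝ, |G2 t x|) := by
  refine ⟨1, one_pos, ?_⟩
  intro T hT f11 f12 f21 f22 G1 G2 h11 h12 h21 h22 hG1 hG2 hcs h1 h2
  obtain ⟨R, hR, hsupp⟩ := hcs
  have s11 : ∀ t x : ℝ, R < |x| → f11 t x = 0 := fun t x h => (hsupp t x h).1
  have s12 : ∀ t x : ℝ, R < |x| → f12 t x = 0 := fun t x h => (hsupp t x h).2.1
  have s21 : ∀ t x : ℝ, R < |x| → f21 t x = 0 := fun t x h => (hsupp t x h).2.2.1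
  have s22 : ∀ t x : ℝ, R < |x| → f22 t x = 0 := fun t x h => (hsupp t x h).2.2.2.1
  have sG1 : ∀ t x : ℝ, R < |x| → G1 t x = 0 := fun t x h => (hsupp t x h).2.2.2.2.1
  have sG2 : ∀ t x : ℝ, R < |x| → G2 t x = 0 := fun t x h => (hsupp t x h).2.2.2.2.2
  have i11 : ∀ t, Integrable (f11 t) := fun t => aux_integrable (aux_cont1 h11 t) (s11 t)
  have i12 : ∀ t, Integrable (f12 t) := fun t => aux_integrable (aux_cont1 h12 t) (s12 t)
  have i21 : ∀ t, Integrable (f21 t) := fun t => aux_integrable (aux_cont1 h21 t) (s21 t)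
  have iG1 : ∀ t, Integrable (G1 t) := fun t => aux_integrable (aux_cont1 hG1 t) (sG1 t)
  have iG2 : ∀ t, Integrable (G2 t) := fun t => aux_integrable (aux_cont1 hG2 t) (sG2 t)
  -- the potentials
  set F : ℝ → ℝ → ℝ := fun t x => ∫ y in Iic x, f21 t y with hFdef
  set Hh : ℝ → ℝ → ℝ := fun t x => ∫ y in Iic x, G2 t y with hHdef
  have Fx : ∀ t x, HasDerivAt (F t) (f21 t x) x := fun t x =>
    aux_hasDerivAt_primitive (aux_cont1 h21 t) (i21 t) x
  have Hx : ∀ t x, HasDerivAt (Hh t) (G2 t x) x := fun t x =>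
    aux_hasDerivAt_primitive (aux_cont1 hG2 t) (iG2 t) x
  have FxC : ∀ t, Continuous (F t) := fun t =>
    continuous_iff_continuousAt.2 fun x => (Fx t x).continuousAt
  have HxC : ∀ t, Continuous (Hh t) := fun t =>
    continuous_iff_continuousAt.2 fun x => (Hx t x).continuousAt
  have Fbnd : ∀ t x, |F t x| ≤ ∫ y : ℝ, |f21 t y| := fun t x =>
    aux_abs_setIntegral_le (i21 t) (Iic x)
  have Hbnd : ∀ t x, |Hh t x| ≤ ∫ y : ℝ, |G2 t y| := fun t x =>
    aux_abs_setIntegral_le (iG2 t) (Iic x)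
  -- time derivative of F
  have Ft : ∀ t x, HasDerivAt (fun s => F s x) (Hh t x + f22 t x) t := by
    intro t x
    have h := aux_hasDerivAt_setIntegral h21 s21 (Iic x) t
    have hptw : ∀ y : ℝ, deriv (fun τ => f21 τ y) t
        = G2 t y + deriv (fun z => f22 t z) y := fun y => by linarith [h2 t y]
    have hderint : Integrable (fun y => deriv (fun z => f22 t z) y) :=
      aux_integrable ((aux_cont_deriv_x h22).comp (continuous_const.prodMk continuous_id))
        (fun y hy => aux_deriv_zero hy (s22 t))
    have heq : (∫ y in Iic x, deriv (fun τ => f21 τ y) t) = Hh t x + f22 t x := by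
      simp only [hptw]
      rw [integral_add ((iG2 t).integrableOn) (hderint.integrableOn),
        aux_integral_Iic_deriv h22 s22 t x]
    rw [heq] at h
    exact h
  have FtC : ∀ x, Continuous fun s => F s x := fun x =>
    continuous_iff_continuousAt.2 fun t => (Ft t x).continuousAt
  have Ht : ∀ t x, HasDerivAt (fun s => Hh s x)
      (∫ y in Iic x, deriv (fun τ => G2 τ y) t) t := fun t x =>
    aux_hasDerivAt_setIntegral hG2 sG2 (Iic x) t
  have HtC : ∀ x, Continuous fun s => Hh s x := fun x =>
    continuous_iff_continuousAt.2 fun t => (Ht t x).continuousAt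
  -- uniform strip bounds for F and Hh
  have bndF : ∀ a b : ℝ, ∃ M, 0 ≤ M ∧ ∀ t ∈ Icc a b, ∀ x : ℝ, |F t x| ≤ M := by
    intro a b
    obtain ⟨M, hM0, hM⟩ := aux_bdd' h21.continuous s21 a b
    exact ⟨M * (2 * R), by positivity, fun t ht x =>
      (Fbnd t x).trans (aux_intabs_le hR (s21 t) (hM t ht))⟩
  have bndH : ∀ a b : ℝ, ∃ M, 0 ≤ M ∧ ∀ t ∈ Icc a b, ∀ x : ℝ, |Hh t x| ≤ M := by
    intro a b
    obtain ⟨M, hM0, hM⟩ := aux_bdd' hG2.continuous sG2 a b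
    exact ⟨M * (2 * R), by positivity, fun t ht x =>
      (Hbnd t x).trans (aux_intabs_le hR (sG2 t) (hM t ht))⟩
  -- the functional and the source terms
  set I : ℝ → ℝ := fun t => ∫ x : ℝ, f11 t x * F t x with hIdef
  set Φ : ℝ → ℝ := fun t => ∫ x : ℝ, (f11 t x * f22 t x + f12 t x * f21 t x) with hΦdef
  set A : ℝ → ℝ := fun t => ∫ x : ℝ, G1 t x * F t x with hAdef
  set B : ℝ → ℝ := fun t => ∫ x : ℝ, f11 t x * Hh t x with hBdef
  -- derivative of the functional
  have hI : ∀ t₀ : ℝ, HasDerivAt I (Φ t₀ + A t₀ + B t₀) t₀ := by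
    intro t₀
    obtain ⟨M1, hM10, hM1⟩ := aux_bdd' (g := fun t x => deriv (fun s => f11 s x) t)
      (aux_cont_deriv_t h11) (fun t x hx => by
        show deriv (fun s => f11 s x) t = 0
        have hz : (fun s => f11 s x) = fun _ => (0:ℝ) := funext fun s => s11 s x hx
        rw [hz]; exact deriv_const _ _) (t₀ - 1) (t₀ + 1)
    obtain ⟨M11, hM110, hM11⟩ := aux_bdd' h11.continuous s11 (t₀ - 1) (t₀ + 1)
    obtain ⟨M22, hM220, hM22⟩ := aux_bdd' h22.continuous s22 (t₀ - 1) (t₀ + 1)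
    obtain ⟨MF, hMF0, hMF⟩ := bndF (t₀ - 1) (t₀ + 1)
    obtain ⟨MH, hMH0, hMH⟩ := bndH (t₀ - 1) (t₀ + 1)
    have main := aux_hasDerivAt_integral (R := R) (φ := fun t x => f11 t x * F t x)
      (φ' := fun t x => deriv (fun s => f11 s x) t * F t x
        + f11 t x * (Hh t x + f22 t x)) t₀
      (fun t => ((aux_cont1 h11 t).mul (FxC t)).aestronglyMeasurable)
      (((((aux_cont_deriv_t h11).comp (continuous_const.prodMk continuous_id)).mul
          (FxC t₀)).add ((aux_cont1 h11 t₀).mul ((HxC t₀).add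
          (aux_cont1 h22 t₀)))).aestronglyMeasurable)
      (aux_integrable ((aux_cont1 h11 t₀).mul (FxC t₀))
        (fun x hx => by show f11 t₀ x * F t₀ x = 0; rw [s11 t₀ x hx, zero_mul]))
      (fun t x hx => by
        show deriv (fun s => f11 s x) t * F t x + f11 t x * (Hh t x + f22 t x) = 0
        have hz : (fun s => f11 s x) = fun _ => (0:ℝ) := funext fun s => s11 s x hx
        rw [s11 t x hx, hz, deriv_const, zero_mul, zero_mul, add_zero])
      ⟨M1 * MF + M11 * (MH + M22), fun t ht x => by
        have ht' := aux_mem_ball_Icc ht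
        calc |deriv (fun s => f11 s x) t * F t x + f11 t x * (Hh t x + f22 t x)|
            ≤ |deriv (fun s => f11 s x) t| * |F t x|
              + |f11 t x| * (|Hh t x| + |f22 t x|) := by
              refine (abs_add_le _ _).trans ?_
              rw [abs_mul, abs_mul]
              gcongr
              exact abs_add_le _ _
          _ ≤ M1 * MF + M11 * (MH + M22) := by
              have b1 := hM1 t ht' x; have b2 := hM11 t ht' x; have b3 := hM22 t ht' x
              have b4 := hMF t ht' x; have b5 := hMH t ht' x
              gcongr <;> first | assumption | positivity⟩
      (fun x t => (aux_hasDerivAt_t h11 t x).mul (Ft t x))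
    beta_reduce at main
    have intG1F : Integrable fun x => G1 t₀ x * F t₀ x :=
      aux_integrable ((aux_cont1 hG1 t₀).mul (FxC t₀))
        (fun x hx => by rw [sG1 t₀ x hx, zero_mul])
    have intFd : Integrable fun x => F t₀ x * deriv (fun y => f12 t₀ y) x :=
      aux_integrable ((FxC t₀).mul ((aux_cont_deriv_x h12).comp
          (continuous_const.prodMk continuous_id)))
        (fun x hx => by rw [aux_deriv_zero hx (s12 t₀), mul_zero])
    have intfH : Integrable fun x => f11 t₀ x * Hh t₀ x :=
      aux_integrable ((aux_cont1 h11 t₀).mul (HxC t₀))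
        (fun x hx => by rw [s11 t₀ x hx, zero_mul])
    have intff : Integrable fun x => f11 t₀ x * f22 t₀ x :=
      aux_integrable ((aux_cont1 h11 t₀).mul (aux_cont1 h22 t₀))
        (fun x hx => by rw [s11 t₀ x hx, zero_mul])
    have int1221 : Integrable fun x => f12 t₀ x * f21 t₀ x :=
      aux_integrable ((aux_cont1 h12 t₀).mul (aux_cont1 h21 t₀))
        (fun x hx => by rw [s12 t₀ x hx, zero_mul])
    have int2112 : Integrable fun x => f21 t₀ x * f12 t₀ x :=
      aux_integrable ((aux_cont1 h21 t₀).mul (aux_cont1 h12 t₀))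
        (fun x hx => by rw [s21 t₀ x hx, zero_mul])
    have intFf : Integrable fun x => F t₀ x * f12 t₀ x :=
      aux_integrable ((FxC t₀).mul (aux_cont1 h12 t₀))
        (fun x hx => by rw [s12 t₀ x hx, mul_zero])
    have hparts : (∫ x : ℝ, F t₀ x * deriv (fun y => f12 t₀ y) x)
        = - ∫ x : ℝ, f21 t₀ x * f12 t₀ x :=
      integral_mul_deriv_eq_deriv_mul_of_integrable (fun x _ => Fx t₀ x)
        (fun x _ => aux_hasDerivAt_x h12 t₀ x) intFd int2112 intFf
    have hval : (∫ x : ℝ, (deriv (fun s => f11 s x) t₀ * F t₀ x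
        + f11 t₀ x * (Hh t₀ x + f22 t₀ x))) = Φ t₀ + A t₀ + B t₀ := by
      have hptw : ∀ x : ℝ, deriv (fun s => f11 s x) t₀ * F t₀ x
          + f11 t₀ x * (Hh t₀ x + f22 t₀ x)
          = (G1 t₀ x * F t₀ x - F t₀ x * deriv (fun y => f12 t₀ y) x)
            + (f11 t₀ x * Hh t₀ x + f11 t₀ x * f22 t₀ x) := by
        intro x
        have e : deriv (fun s => f11 s x) t₀
            = G1 t₀ x - deriv (fun y => f12 t₀ y) x := by linarith [h1 t₀ x]
        rw [e]; ring
      simp only [hptw]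
      rw [integral_add
          (f := fun x => G1 t₀ x * F t₀ x - F t₀ x * deriv (fun y => f12 t₀ y) x)
          (g := fun x => f11 t₀ x * Hh t₀ x + f11 t₀ x * f22 t₀ x)
          (intG1F.sub intFd) (intfH.add intff),
        integral_sub intG1F intFd, integral_add intfH intff, hparts]
      have hPhi : Φ t₀ = (∫ x : ℝ, f11 t₀ x * f22 t₀ x)
          + ∫ x : ℝ, f12 t₀ x * f21 t₀ x := by
        rw [hΦdef]
        exact integral_add intff int1221
      have hcomm : (∫ x : ℝ, f21 t₀ x * f12 t₀ x) = ∫ x : ℝ, f12 t₀ x * f21 t₀ x :=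
        integral_congr_ae (Filter.Eventually.of_forall fun x => mul_comm _ _)
      rw [hPhi, hcomm, hAdef, hBdef]
      ring
    exact hval ▸ main
  -- continuity of the integrated quantities
  have contN : ∀ (f : ℝ → ℝ → ℝ), ContDiff ℝ (⊤ : ℕ∞) (fun p : ℝ × ℝ => f p.1 p.2) →
      (∀ t x : ℝ, R < |x| → f t x = 0) →
      Continuous fun t => ∫ x : ℝ, |f t x| := by
    intro f hf hs
    refine aux_cont_param (R := R)
      (fun t => (aux_cont1 hf t).abs.aestronglyMeasurable)
      (fun t x hx => by rw [hs t x hx, abs_zero])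
      (fun t₀ => ?_) (fun x => (aux_cont2 hf x).abs)
    obtain ⟨M, hM0, hM⟩ := aux_bdd' hf.continuous hs (t₀ - 1) (t₀ + 1)
    exact ⟨M, fun t ht x => by rw [abs_abs]; exact hM t (aux_mem_ball_Icc ht) x⟩
  have contN11 := contN f11 h11 s11
  have contN21 := contN f21 h21 s21
  have contNG1 := contN G1 hG1 sG1
  have contNG2 := contN G2 hG2 sG2
  have contPhi : Continuous Φ := by
    rw [hΦdef]
    refine aux_cont_param (R := R)
      (fun t => (((aux_cont1 h11 t).mul (aux_cont1 h22 t)).add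
        ((aux_cont1 h12 t).mul (aux_cont1 h21 t))).aestronglyMeasurable)
      (fun t x hx => by rw [s11 t x hx, s12 t x hx, zero_mul, zero_mul, add_zero])
      (fun t₀ => ?_)
      (fun x => ((aux_cont2 h11 x).mul (aux_cont2 h22 x)).add
        ((aux_cont2 h12 x).mul (aux_cont2 h21 x)))
    obtain ⟨M11, hM110, hM11⟩ := aux_bdd' h11.continuous s11 (t₀ - 1) (t₀ + 1)
    obtain ⟨M22, hM220, hM22⟩ := aux_bdd' h22.continuous s22 (t₀ - 1) (t₀ + 1)
    obtain ⟨M12, hM120, hM12⟩ := aux_bdd' h12.continuous s12 (t₀ - 1) (t₀ + 1)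
    obtain ⟨M21, hM210, hM21⟩ := aux_bdd' h21.continuous s21 (t₀ - 1) (t₀ + 1)
    refine ⟨M11 * M22 + M12 * M21, fun t ht x => ?_⟩
    have ht' := aux_mem_ball_Icc ht
    calc |f11 t x * f22 t x + f12 t x * f21 t x|
        ≤ |f11 t x| * |f22 t x| + |f12 t x| * |f21 t x| := by
          refine (abs_add_le _ _).trans ?_
          rw [abs_mul, abs_mul]
      _ ≤ M11 * M22 + M12 * M21 := by
          have b1 := hM11 t ht' x; have b2 := hM22 t ht' x
          have b3 := hM12 t ht' x; have b4 := hM21 t ht' x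
          gcongr <;> first | assumption | positivity
  have contA : Continuous A := by
    rw [hAdef]
    refine aux_cont_param (R := R)
      (fun t => ((aux_cont1 hG1 t).mul (FxC t)).aestronglyMeasurable)
      (fun t x hx => by rw [sG1 t x hx, zero_mul]) (fun t₀ => ?_)
      (fun x => (aux_cont2 hG1 x).mul (FtC x))
    obtain ⟨MG, hMG0, hMG⟩ := aux_bdd' hG1.continuous sG1 (t₀ - 1) (t₀ + 1)
    obtain ⟨MF, hMF0, hMF⟩ := bndF (t₀ - 1) (t₀ + 1)
    refine ⟨MG * MF, fun t ht x => ?_⟩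
    have ht' := aux_mem_ball_Icc ht
    rw [abs_mul]
    exact mul_le_mul (hMG t ht' x) (hMF t ht' x) (abs_nonneg _) hMG0
  have contB : Continuous B := by
    rw [hBdef]
    refine aux_cont_param (R := R)
      (fun t => ((aux_cont1 h11 t).mul (HxC t)).aestronglyMeasurable)
      (fun t x hx => by rw [s11 t x hx, zero_mul]) (fun t₀ => ?_)
      (fun x => (aux_cont2 h11 x).mul (HtC x))
    obtain ⟨M11, hM110, hM11⟩ := aux_bdd' h11.continuous s11 (t₀ - 1) (t₀ + 1)
    obtain ⟨MH, hMH0, hMH⟩ := bndH (t₀ - 1) (t₀ + 1)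
    refine ⟨M11 * MH, fun t ht x => ?_⟩
    have ht' := aux_mem_ball_Icc ht
    rw [abs_mul]
    exact mul_le_mul (hM11 t ht' x) (hMH t ht' x) (abs_nonneg _) hM110
  -- the supremum facts
  have supFact : ∀ (f : ℝ → ℝ → ℝ), Continuous (fun t => ∫ x : ℝ, |f t x|) →
      ∀ t ∈ Icc (0:ℝ) T, (∫ x : ℝ, |f t x|)
        ≤ ⨆ s ∈ Icc (0:ℝ) T, ∫ x : ℝ, |f s x| := by
    intro f cN t ht
    obtain ⟨M, hM⟩ := (isCompact_Icc.image cN).bddAbove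
    have hbdd : BddAbove (Set.range fun s => ⨆ _ : s ∈ Icc (0:ℝ) T,
        ∫ x : ℝ, |f s x|) := by
      refine ⟨max M 0, ?_⟩
      rintro v ⟨s, rfl⟩
      beta_reduce
      by_cases hsm : s ∈ Icc (0:ℝ) T
      · rw [ciSup_pos (f := fun _ : s ∈ Icc (0:ℝ) T => ∫ x : ℝ, |f s x|) hsm]
        exact le_trans (hM ⟨s, hsm, rfl⟩) (le_max_left _ _)
      · rw [ciSup_neg (f := fun _ : s ∈ Icc (0:ℝ) T => ∫ x : ℝ, |f s x|) hsm,
          Real.sSup_empty]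
        exact le_max_right _ _
    calc (∫ x : ℝ, |f t x|)
        = ⨆ _ : t ∈ Icc (0:ℝ) T, ∫ x : ℝ, |f t x| :=
          (ciSup_pos (f := fun _ : t ∈ Icc (0:ℝ) T => ∫ x : ℝ, |f t x|) ht).symm
      _ ≤ _ := le_ciSup hbdd t
  have mem0 : (0:ℝ) ∈ Icc (0:ℝ) T := ⟨le_refl 0, hT.le⟩
  have memT : T ∈ Icc (0:ℝ) T := ⟨hT.le, le_refl T⟩
  have hsup11 := supFact f11 contN11
  have hsup21 := supFact f21 contN21
  set as : ℝ := ⨆ t ∈ Icc (0:ℝ) T, ∫ x : ℝ, |f11 t x| with hasdef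
  set bs : ℝ := ⨆ t ∈ Icc (0:ℝ) T, ∫ x : ℝ, |f21 t x| with hbsdef
  have ha0 : (0:ℝ) ≤ ∫ x : ℝ, |f11 0 x| := integral_nonneg fun x => abs_nonneg _
  have hb0 : (0:ℝ) ≤ ∫ x : ℝ, |f21 0 x| := integral_nonneg fun x => abs_nonneg _
  have has : (0:ℝ) ≤ as := le_trans ha0 (hsup11 0 mem0)
  have hbs : (0:ℝ) ≤ bs := le_trans hb0 (hsup21 0 mem0)
  have hag : (0:ℝ) ≤ ∫ t in Icc (0:ℝ) T, ∫ x : ℝ, |G1 t x| :=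
    integral_nonneg fun t => integral_nonneg fun x => abs_nonneg _
  have hbg : (0:ℝ) ≤ ∫ t in Icc (0:ℝ) T, ∫ x : ℝ, |G2 t x| :=
    integral_nonneg fun t => integral_nonneg fun x => abs_nonneg _
  have eqIcc : ∀ g : ℝ → ℝ, (∫ t in Icc (0:ℝ) T, g t) = ∫ t in (0:ℝ)..T, g t := by
    intro g
    rw [intervalIntegral.integral_of_le hT.le, integral_Icc_eq_integral_Ioc]
  -- the fundamental theorem of calculus
  have key : (∫ t in (0:ℝ)..T, (Φ t + A t + B t)) = I T - I 0 :=
    intervalIntegral.integral_eq_sub_of_hasDerivAt (fun t _ => hI t)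
      (((contPhi.add contA).add contB).intervalIntegrable 0 T)
  have splitAdd : (∫ t in (0:ℝ)..T, (Φ t + A t + B t))
      = (∫ t in (0:ℝ)..T, Φ t) + (∫ t in (0:ℝ)..T, A t) + ∫ t in (0:ℝ)..T, B t := by
    rw [intervalIntegral.integral_add (f := fun t => Φ t + A t) ((contPhi.add contA).intervalIntegrable 0 T)
      (contB.intervalIntegrable 0 T),
      intervalIntegral.integral_add (contPhi.intervalIntegrable 0 T)
      (contA.intervalIntegrable 0 T)]
  -- pointwise bounds for the functionals
  have bI : ∀ t, |I t| ≤ (∫ x : ℝ, |f11 t x|) * ∫ y : ℝ, |f21 t y| := by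
    intro t
    have hint : Integrable (fun x => f11 t x * F t x) :=
      aux_integrable ((aux_cont1 h11 t).mul (FxC t))
        (fun x hx => by rw [s11 t x hx, zero_mul])
    show |∫ x : ℝ, f11 t x * F t x| ≤ _
    calc |∫ x : ℝ, f11 t x * F t x| ≤ ∫ x : ℝ, |f11 t x * F t x| :=
          norm_integral_le_integral_norm (μ := volume) (fun x => f11 t x * F t x)
      _ ≤ ∫ x : ℝ, |f11 t x| * ∫ y : ℝ, |f21 t y| := by
          refine integral_mono hint.abs ((i11 t).abs.mul_const _) fun x => ?_
          rw [abs_mul]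
          exact mul_le_mul_of_nonneg_left (Fbnd t x) (abs_nonneg _)
      _ = (∫ x : ℝ, |f11 t x|) * ∫ y : ℝ, |f21 t y| := integral_mul_const _ _
  have bA : ∀ t, |A t| ≤ (∫ x : ℝ, |G1 t x|) * ∫ y : ℝ, |f21 t y| := by
    intro t
    have hint : Integrable (fun x => G1 t x * F t x) :=
      aux_integrable ((aux_cont1 hG1 t).mul (FxC t))
        (fun x hx => by rw [sG1 t x hx, zero_mul])
    show |∫ x : ℝ, G1 t x * F t x| ≤ _
    calc |∫ x : ℝ, G1 t x * F t x| ≤ ∫ x : ℝ, |G1 t x * F t x| :=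
          norm_integral_le_integral_norm (μ := volume) (fun x => G1 t x * F t x)
      _ ≤ ∫ x : ℝ, |G1 t x| * ∫ y : ℝ, |f21 t y| := by
          refine integral_mono hint.abs ((iG1 t).abs.mul_const _) fun x => ?_
          rw [abs_mul]
          exact mul_le_mul_of_nonneg_left (Fbnd t x) (abs_nonneg _)
      _ = (∫ x : ℝ, |G1 t x|) * ∫ y : ℝ, |f21 t y| := integral_mul_const _ _
  have bB : ∀ t, |B t| ≤ (∫ x : ℝ, |f11 t x|) * ∫ y : ℝ, |G2 t y| := by
    intro t
    have hint : Integrable (fun x => f11 t x * Hh t x) :=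
      aux_integrable ((aux_cont1 h11 t).mul (HxC t))
        (fun x hx => by rw [s11 t x hx, zero_mul])
    show |∫ x : ℝ, f11 t x * Hh t x| ≤ _
    calc |∫ x : ℝ, f11 t x * Hh t x| ≤ ∫ x : ℝ, |f11 t x * Hh t x| :=
          norm_integral_le_integral_norm (μ := volume) (fun x => f11 t x * Hh t x)
      _ ≤ ∫ x : ℝ, |f11 t x| * ∫ y : ℝ, |G2 t y| := by
          refine integral_mono hint.abs ((i11 t).abs.mul_const _) fun x => ?_
          rw [abs_mul]
          exact mul_le_mul_of_nonneg_left (Hbnd t x) (abs_nonneg _)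
      _ = (∫ x : ℝ, |f11 t x|) * ∫ y : ℝ, |G2 t y| := integral_mul_const _ _
  -- integral estimates
  have estA : |∫ t in (0:ℝ)..T, A t|
      ≤ (∫ t in (0:ℝ)..T, ∫ x : ℝ, |G1 t x|) * bs := by
    refine (intervalIntegral.abs_integral_le_integral_abs hT.le).trans ?_
    have h2' : (∫ t in (0:ℝ)..T, |A t|)
        ≤ ∫ t in (0:ℝ)..T, (∫ x : ℝ, |G1 t x|) * bs :=
      intervalIntegral.integral_mono_on hT.le (contA.abs.intervalIntegrable 0 T)
        ((contNG1.mul continuous_const).intervalIntegrable 0 T)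
        (fun t ht => (bA t).trans (mul_le_mul_of_nonneg_left (hsup21 t ht)
          (integral_nonneg fun x => abs_nonneg _)))
    rwa [intervalIntegral.integral_mul_const] at h2'
  have estB : |∫ t in (0:ℝ)..T, B t|
      ≤ as * ∫ t in (0:ℝ)..T, ∫ x : ℝ, |G2 t x| := by
    refine (intervalIntegral.abs_integral_le_integral_abs hT.le).trans ?_
    have h2' : (∫ t in (0:ℝ)..T, |B t|)
        ≤ ∫ t in (0:ℝ)..T, as * ∫ x : ℝ, |G2 t x| :=
      intervalIntegral.integral_mono_on hT.le (contB.abs.intervalIntegrable 0 T)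
        ((continuous_const.mul contNG2).intervalIntegrable 0 T)
        (fun t ht => (bB t).trans (mul_le_mul_of_nonneg_right (hsup11 t ht)
          (integral_nonneg fun x => abs_nonneg _)))
    rwa [intervalIntegral.integral_const_mul] at h2'
  have estIT : |I T| ≤ as * bs :=
    (bI T).trans (mul_le_mul (hsup11 T memT) (hsup21 T memT)
      (integral_nonneg fun _ => abs_nonneg _) has)
  have estI0 : |I 0| ≤ (∫ x : ℝ, |f11 0 x|) * ∫ x : ℝ, |f21 0 x| := bI 0
  -- conclusion
  have e1 := abs_le.mp estIT
  have e2 := abs_le.mp estI0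
  have e3 := abs_le.mp estA
  have e4 := abs_le.mp estB
  have hagEq : (∫ t in Icc (0:ℝ) T, ∫ x : ℝ, |G1 t x|)
      = ∫ t in (0:ℝ)..T, ∫ x : ℝ, |G1 t x| := eqIcc _
  have hbgEq : (∫ t in Icc (0:ℝ) T, ∫ x : ℝ, |G2 t x|)
      = ∫ t in (0:ℝ)..T, ∫ x : ℝ, |G2 t x| := eqIcc _
  calc (∫ t in Icc (0:ℝ) T, Φ t) = ∫ t in (0:ℝ)..T, Φ t := eqIcc Φ
    _ = (I T - I 0) - (∫ t in (0:ℝ)..T, A t) - ∫ t in (0:ℝ)..T, B t := by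
        linarith [key, splitAdd]
    _ ≤ as * bs + (∫ x : ℝ, |f11 0 x|) * (∫ x : ℝ, |f21 0 x|)
        + (∫ t in Icc (0:ℝ) T, ∫ x : ℝ, |G1 t x|) * bs
        + as * ∫ t in Icc (0:ℝ) T, ∫ x : ℝ, |G2 t x| := by
        rw [hagEq, hbgEq]
        linarith [e1.2, e2.1, e3.1, e4.1]
    _ ≤ 1 * ((∫ x : ℝ, |f11 0 x|) + as + ∫ t in Icc (0:ℝ) T, ∫ x : ℝ, |G1 t x|)
        * ((∫ x : ℝ, |f21 0 x|) + bs + ∫ t in Icc (0:ℝ) T, ∫ x : ℝ, |G2 t x|) := by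
        nlinarith [mul_nonneg ha0 hbs, mul_nonneg ha0 hbg, mul_nonneg has hb0,
          mul_nonneg hag hb0, mul_nonneg hag hbg]
end

section
/- Let f¹¹, f¹², f²¹, f²², G¹, G² : [0,T] × ℝ → ℝ be smooth functions, 1-periodic in x, satisfying ∂_t f¹¹ + ∂_x f¹² = G¹ and ∂_t f²¹ - ∂_x f²² = G². Then there is a universal constant C > 0 such that ∫₀^T ∫₀¹ (f¹¹ f²² + f¹² f²¹) dx dt ≤ C · [(‖f¹¹(0,·)‖_{L¹[0,1]} + sup_{0≤t≤T} ‖f¹¹(t,·)‖_{L¹[0,1]} + ∫₀^T ∫₀¹ |G¹|) · (‖f²¹(0,·)‖_{L¹[0,1]} + sup_{0≤t≤T} ‖f²¹(t,·)‖_{L¹[0,1]} + ∫₀^T ∫₀¹ |G²|) + ∫₀^T ((∫₀¹ f¹¹ dx)(∫₀¹ f²² dx) + (∫₀¹ f¹² dx)(∫₀¹ f²¹ dx)) dt]. -/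
open MeasureTheory intervalIntegral Set


lemma slice2 {f : ℝ → ℝ → ℝ} (hf : ContDiff ℝ (⊤ : ℕ∞) (fun p : ℝ × ℝ => f p.1 p.2)) (t : ℝ) :
    ContDiff ℝ (⊤ : ℕ∞) (f t) := hf.comp (contDiff_prodMk_right t)

lemma slice1 {f : ℝ → ℝ → ℝ} (hf : ContDiff ℝ (⊤ : ℕ∞) (fun p : ℝ × ℝ => f p.1 p.2)) (x : ℝ) :
    ContDiff ℝ (⊤ : ℕ∞) (fun s => f s x) := hf.comp (contDiff_prodMk_left x)

lemma hasDerivAt2 {f : ℝ → ℝ → ℝ} (hf : ContDiff ℝ (⊤ : ℕ∞) (fun p : ℝ × ℝ => f p.1 p.2)) (t x : ℝ) :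
    HasDerivAt (f t) ((fderiv ℝ (fun p : ℝ × ℝ => f p.1 p.2) (t, x)) (0, 1)) x := by
  have h1 : HasFDerivAt (fun p : ℝ × ℝ => f p.1 p.2)
      (fderiv ℝ (fun p : ℝ × ℝ => f p.1 p.2) (t, x)) (t, x) :=
    (hf.differentiable (by simp) (t, x)).hasFDerivAt
  have h2 : HasDerivAt (fun x : ℝ => ((t, x) : ℝ × ℝ)) ((0 : ℝ), (1 : ℝ)) x :=
    (hasDerivAt_const x t).prodMk (hasDerivAt_id x)
  exact h1.comp_hasDerivAt x h2

lemma hasDerivAt1 {f : ℝ → ℝ → ℝ} (hf : ContDiff ℝ (⊤ : ℕ∞) (fun p : ℝ × ℝ => f p.1 p.2)) (t x : ℝ) :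
    HasDerivAt (fun s => f s x) ((fderiv ℝ (fun p : ℝ × ℝ => f p.1 p.2) (t, x)) (1, 0)) t := by
  have h1 : HasFDerivAt (fun p : ℝ × ℝ => f p.1 p.2)
      (fderiv ℝ (fun p : ℝ × ℝ => f p.1 p.2) (t, x)) (t, x) :=
    (hf.differentiable (by simp) (t, x)).hasFDerivAt
  have h2 : HasDerivAt (fun s : ℝ => ((s, x) : ℝ × ℝ)) ((1 : ℝ), (0 : ℝ)) t :=
    (hasDerivAt_id t).prodMk (hasDerivAt_const t x)
  exact h1.comp_hasDerivAt t h2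

lemma deriv2_eq {f : ℝ → ℝ → ℝ} (hf : ContDiff ℝ (⊤ : ℕ∞) (fun p : ℝ × ℝ => f p.1 p.2)) (t x : ℝ) :
    deriv (f t) x = (fderiv ℝ (fun p : ℝ × ℝ => f p.1 p.2) (t, x)) (0, 1) :=
  (hasDerivAt2 hf t x).deriv

lemma deriv1_eq {f : ℝ → ℝ → ℝ} (hf : ContDiff ℝ (⊤ : ℕ∞) (fun p : ℝ × ℝ => f p.1 p.2)) (t x : ℝ) :
    deriv (fun s => f s x) t = (fderiv ℝ (fun p : ℝ × ℝ => f p.1 p.2) (t, x)) (1, 0) :=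
  (hasDerivAt1 hf t x).deriv

lemma cont_deriv2 {f : ℝ → ℝ → ℝ} (hf : ContDiff ℝ (⊤ : ℕ∞) (fun p : ℝ × ℝ => f p.1 p.2)) :
    Continuous (fun p : ℝ × ℝ => deriv (f p.1) p.2) := by
  have h : Continuous (fun p : ℝ × ℝ => (fderiv ℝ (fun p : ℝ × ℝ => f p.1 p.2) p) ((0:ℝ), (1:ℝ))) :=
    (hf.continuous_fderiv (by simp)).clm_apply continuous_const
  exact h.congr (fun p => (deriv2_eq hf p.1 p.2).symm)

noncomputable def KK (x y : ℝ) : ℝ := (if y < x then 1 else 0) - 1/2 - x + y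

lemma KK_left {x y : ℝ} (h : x ≤ y) : KK x y = (y - 1/2) - x := by
  unfold KK; rw [if_neg (not_lt.2 h)]; ring

lemma KK_right {x y : ℝ} (h : y < x) : KK x y = (y + 1/2) - x := by
  unfold KK; rw [if_pos h]; ring


lemma KK_meas : Measurable (fun p : ℝ × ℝ => KK p.1 p.2) := by
  unfold KK
  exact (((Measurable.ite (measurableSet_lt measurable_snd measurable_fst)
    measurable_const measurable_const).sub measurable_const).sub measurable_fst).add
    measurable_snd

lemma KK_bound {x y : ℝ} (hx : x ∈ Icc (0:ℝ) 1) (hy : y ∈ Icc (0:ℝ) 1) :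
    |KK x y| ≤ 1/2 := by
  unfold KK
  rcases hx with ⟨hx0, hx1⟩; rcases hy with ⟨hy0, hy1⟩
  rcases lt_or_ge y x with h | h
  · rw [if_pos h, abs_le]; constructor <;> nlinarith
  · rw [if_neg (not_lt.2 h), abs_le]; constructor <;> nlinarith

lemma KK_abs_le (x y : ℝ) : |KK x y| ≤ 3/2 + |x| + |y| := by
  unfold KK
  rcases lt_or_ge y x with h | h
  · rw [if_pos h, abs_le]
    constructor <;> nlinarith [le_abs_self x, neg_abs_le x, le_abs_self y, neg_abs_le y]
  · rw [if_neg (not_lt.2 h), abs_le]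
    constructor <;> nlinarith [le_abs_self x, neg_abs_le x, le_abs_self y, neg_abs_le y]

-- bounded measurable on Ioc gives interval integrable
lemma intInt_of_bdd {f : ℝ → ℝ} {a b C : ℝ} (hab : a ≤ b) (hm : Measurable f)
    (hb : ∀ x ∈ Ioc a b, |f x| ≤ C) : IntervalIntegrable f volume a b := by
  rw [intervalIntegrable_iff, uIoc_of_le hab]
  apply Integrable.mono' (integrable_const C) hm.aestronglyMeasurable
  apply MeasureTheory.ae_restrict_of_forall_mem measurableSet_Ioc
  intro x hx; simpa [Real.norm_eq_abs] using hb x hx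

lemma KKint_y (x : ℝ) {ψ : ℝ → ℝ} (hψ : Continuous ψ) :
    IntervalIntegrable (fun y => KK x y * ψ y) volume 0 1 := by
  obtain ⟨Cψ, hCψ⟩ := (isCompact_Icc (a := (0:ℝ)) (b := 1)).exists_bound_of_continuousOn
    hψ.continuousOn
  apply intInt_of_bdd zero_le_one
  · exact ((KK_meas.comp (measurable_const.prodMk measurable_id)).mul hψ.measurable)
  · intro y hy
    have h1 : |KK x y| ≤ 5/2 + |x| := by
      have := KK_abs_le x y
      have hy1 : |y| ≤ 1 := by
        rw [abs_le]; exact ⟨by linarith [hy.1], hy.2⟩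
      calc |KK x y| ≤ 3/2 + |x| + |y| := this
        _ ≤ 5/2 + |x| := by linarith
    have h2 : |ψ y| ≤ Cψ := by
      simpa [Real.norm_eq_abs] using hCψ y ⟨le_of_lt hy.1, hy.2⟩
    calc |KK x y * ψ y| = |KK x y| * |ψ y| := abs_mul _ _
      _ ≤ (5/2 + |x|) * Cψ := by
          apply mul_le_mul h1 h2 (abs_nonneg _)
          positivity

-- integration by parts building block
lemma parts {g : ℝ → ℝ} (hg : ContDiff ℝ (⊤ : ℕ∞) g) (a b c : ℝ) :
    ∫ x in a..b, deriv g x * (c - x) =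
      g b * (c - b) - g a * (c - a) + ∫ x in a..b, g x := by
  have hd : ∀ x ∈ uIcc a b, HasDerivAt g (deriv g x) x :=
    fun x _ => (hg.differentiable (by simp) x).hasDerivAt
  have hv : ∀ x ∈ uIcc a b, HasDerivAt (fun x => c - x) (-1 : ℝ) x := by
    intro x _
    simpa using ((hasDerivAt_id x).const_sub c)
  have h1 : IntervalIntegrable (deriv g) volume a b :=
    ((hg.continuous_deriv (by simp))).intervalIntegrable a b
  have h2 : IntervalIntegrable (fun _ : ℝ => (-1 : ℝ)) volume a b :=
    intervalIntegrable_const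
  have := intervalIntegral.integral_deriv_mul_eq_sub hd hv h1 h2
  have hsplit : ∫ x in a..b, (deriv g x * (c - x) + g x * (-1)) =
      (∫ x in a..b, deriv g x * (c - x)) + ∫ x in a..b, g x * (-1) := by
    apply intervalIntegral.integral_add
    · exact (((hg.continuous_deriv (by simp)).mul (by continuity))).intervalIntegrable a b
    · exact ((hg.continuous).mul continuous_const).intervalIntegrable a b
  rw [hsplit] at this
  have : (∫ x in a..b, deriv g x * (c - x)) - ∫ x in a..b, g x
      = g b * (c - b) - g a * (c - a) := by
    simp only [mul_neg, mul_one, intervalIntegral.integral_neg] at this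
    linarith [this]
  linarith [this]

lemma parts' {g : ℝ → ℝ} (hg : ContDiff ℝ (⊤ : ℕ∞) g) (a b c : ℝ) :
    ∫ x in a..b, deriv g x * (x - c) =
      g b * (b - c) - g a * (a - c) - ∫ x in a..b, g x := by
  have h := parts hg a b c
  have : ∫ x in a..b, deriv g x * (x - c) = -∫ x in a..b, deriv g x * (c - x) := by
    rw [← intervalIntegral.integral_neg]
    congr 1; funext x; ring
  rw [this, h]; ring

lemma ae_ne (x : ℝ) : ∀ᵐ y : ℝ, y ≠ x := by
  have : MeasureTheory.volume ({x} : Set ℝ) = 0 := measure_singleton x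
  have h := MeasureTheory.measure_eq_zero_iff_ae_notMem.mp this
  filter_upwards [h] with y hy
  simpa using hy

lemma kernel_parts_y {g : ℝ → ℝ} (hg : ContDiff ℝ (⊤ : ℕ∞) g) (hper : g 1 = g 0)
    {x : ℝ} (hx : x ∈ Icc (0:ℝ) 1) :
    ∫ y in (0:ℝ)..1, KK x y * deriv g y = g x - ∫ y in (0:ℝ)..1, g y := by
  obtain ⟨hx0, hx1⟩ := hx
  have hcont := hg.continuous
  have hder := hg.continuous_deriv (by simp)
  have e1 : ∫ y in (0:ℝ)..x, KK x y * deriv g y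
      = ∫ y in (0:ℝ)..x, deriv g y * (y - (x - 1/2)) := by
    apply intervalIntegral.integral_congr_ae
    filter_upwards [ae_ne x] with y hy hmem
    rw [Set.uIoc_of_le hx0] at hmem
    rw [KK_right (lt_of_le_of_ne hmem.2 hy)]; ring
  have e2 : ∫ y in x..(1:ℝ), KK x y * deriv g y
      = ∫ y in x..(1:ℝ), deriv g y * (y - (x + 1/2)) := by
    apply intervalIntegral.integral_congr_ae
    apply Filter.Eventually.of_forall
    intro y hmem
    rw [Set.uIoc_of_le hx1] at hmem
    rw [KK_left (le_of_lt hmem.1)]; ring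
  have i1 : IntervalIntegrable (fun y => KK x y * deriv g y) volume 0 x := by
    apply IntervalIntegrable.congr_ae
      ((hder.mul (by continuity : Continuous fun y : ℝ => y - (x - 1/2))).intervalIntegrable 0 x)
    refine ((ae_restrict_of_ae (ae_ne x)).and
      (ae_restrict_mem measurableSet_uIoc)).mono ?_
    rintro y ⟨hy, hmem⟩
    rw [Set.uIoc_of_le hx0] at hmem
    simp only [KK_right (lt_of_le_of_ne hmem.2 hy), Pi.mul_apply]; ring
  have i2 : IntervalIntegrable (fun y => KK x y * deriv g y) volume x 1 := by
    apply IntervalIntegrable.congr_ae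
      ((hder.mul (by continuity : Continuous fun y : ℝ => y - (x + 1/2))).intervalIntegrable x 1)
    apply MeasureTheory.ae_restrict_of_forall_mem measurableSet_uIoc
    intro y hmem
    rw [Set.uIoc_of_le hx1] at hmem
    simp only [KK_left (le_of_lt hmem.1), Pi.mul_apply]; ring
  have hsplit := intervalIntegral.integral_add_adjacent_intervals i1 i2
  have hsplitg := intervalIntegral.integral_add_adjacent_intervals
    (hcont.intervalIntegrable 0 x : IntervalIntegrable g volume 0 x)
    (hcont.intervalIntegrable x 1 : IntervalIntegrable g volume x 1)
  have p1' : ∫ y in (0:ℝ)..x, deriv g y * (y - (x - 1/2))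
      = g x * (x - (x - 1/2)) - g 0 * (0 - (x - 1/2)) - ∫ y in (0:ℝ)..x, g y := parts' hg 0 x _
  have p2' : ∫ y in x..(1:ℝ), deriv g y * (y - (x + 1/2))
      = g 1 * (1 - (x + 1/2)) - g x * (x - (x + 1/2)) - ∫ y in x..(1:ℝ), g y := parts' hg x 1 _
  rw [← hsplit, e1, e2, p1', p2', ← hsplitg]
  rw [hper]; ring

-- key by-parts identity in x
lemma kernel_parts_x {g : ℝ → ℝ} (hg : ContDiff ℝ (⊤ : ℕ∞) g) (hper : g 1 = g 0)
    {y : ℝ} (hy : y ∈ Icc (0:ℝ) 1) :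
    ∫ x in (0:ℝ)..1, deriv g x * KK x y = (∫ x in (0:ℝ)..1, g x) - g y := by
  obtain ⟨hy0, hy1⟩ := hy
  have hcont := hg.continuous
  have hder := hg.continuous_deriv (by simp)
  -- piece 1 : over 0..y
  have e1 : ∫ x in (0:ℝ)..y, deriv g x * KK x y
      = ∫ x in (0:ℝ)..y, deriv g x * ((y - 1/2) - x) := by
    apply intervalIntegral.integral_congr_ae
    apply Filter.Eventually.of_forall
    intro x hx
    rw [Set.uIoc_of_le hy0] at hx
    rw [KK_left hx.2]
  have e2 : ∫ x in y..(1:ℝ), deriv g x * KK x y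
      = ∫ x in y..(1:ℝ), deriv g x * ((y + 1/2) - x) := by
    apply intervalIntegral.integral_congr_ae
    apply Filter.Eventually.of_forall
    intro x hx
    rw [Set.uIoc_of_le hy1] at hx
    rw [KK_right hx.1]
  have i1 : IntervalIntegrable (fun x => deriv g x * KK x y) volume 0 y := by
    apply IntervalIntegrable.congr_ae
      ((hder.mul (by continuity : Continuous fun x : ℝ => (y - 1/2) - x)).intervalIntegrable 0 y)
    apply MeasureTheory.ae_restrict_of_forall_mem measurableSet_uIoc
    intro x hx
    rw [Set.uIoc_of_le hy0] at hx
    simp only [KK_left hx.2, Pi.mul_apply]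
  have i2 : IntervalIntegrable (fun x => deriv g x * KK x y) volume y 1 := by
    apply IntervalIntegrable.congr_ae
      ((hder.mul (by continuity : Continuous fun x : ℝ => (y + 1/2) - x)).intervalIntegrable y 1)
    apply MeasureTheory.ae_restrict_of_forall_mem measurableSet_uIoc
    intro x hx
    rw [Set.uIoc_of_le hy1] at hx
    simp only [KK_right hx.1, Pi.mul_apply]
  have hsplit := intervalIntegral.integral_add_adjacent_intervals i1 i2
  have hsplitg := intervalIntegral.integral_add_adjacent_intervals
    (hcont.intervalIntegrable 0 y : IntervalIntegrable g volume 0 y)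
    (hcont.intervalIntegrable y 1 : IntervalIntegrable g volume y 1)
  have p1 := parts hg 0 y (y - 1/2)
  have p2 := parts hg y 1 (y + 1/2)
  rw [← hsplit, e1, e2, p1, p2]
  rw [← hsplitg]
  ring_nf
  rw [hper]
  ring

lemma KKint_x (y : ℝ) {φ : ℝ → ℝ} (hφ : Continuous φ) :
    IntervalIntegrable (fun x => φ x * KK x y) volume 0 1 := by
  obtain ⟨C, hC⟩ := (isCompact_Icc (a := (0:ℝ)) (b := 1)).exists_bound_of_continuousOn
    hφ.continuousOn
  apply intInt_of_bdd zero_le_one (C := C * (5/2 + |y|))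
  · exact hφ.measurable.mul (KK_meas.comp (measurable_id.prodMk measurable_const))
  · intro x hx
    have hx1 : |x| ≤ 1 := by rw [abs_le]; exact ⟨by linarith [hx.1], hx.2⟩
    have h1 : |KK x y| ≤ 5/2 + |y| := by
      have := KK_abs_le x y; linarith
    have h2 : |φ x| ≤ C := by
      simpa [Real.norm_eq_abs] using hC x ⟨le_of_lt hx.1, hx.2⟩
    calc |φ x * KK x y| = |φ x| * |KK x y| := abs_mul _ _
      _ ≤ C * (5/2 + |y|) := by
          apply mul_le_mul h2 h1 (abs_nonneg _) ((abs_nonneg _).trans h2)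

-- measurability of the parametric kernel integral
lemma S_meas {ψ : ℝ → ℝ} (hψ : Continuous ψ) :
    Measurable (fun x => ∫ y in (0:ℝ)..1, KK x y * ψ y) := by
  have he : (fun x => ∫ y in (0:ℝ)..1, KK x y * ψ y)
      = fun x => ∫ y in Ioc (0:ℝ) 1, KK x y * ψ y := by
    funext x; exact intervalIntegral.integral_of_le zero_le_one
  rw [he]
  have hm : StronglyMeasurable (fun p : ℝ × ℝ => KK p.1 p.2 * ψ p.2) :=
    (KK_meas.mul (hψ.measurable.comp measurable_snd)).stronglyMeasurable
  exact (MeasureTheory.StronglyMeasurable.integral_prod_right' (f := fun p : ℝ × ℝ => KK p.1 p.2 * ψ p.2) hm).measurable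

-- bound for the parametric kernel integral
lemma S_bound {ψ : ℝ → ℝ} (hψ : Continuous ψ) {x : ℝ} (hx : x ∈ Icc (0:ℝ) 1) :
    |∫ y in (0:ℝ)..1, KK x y * ψ y| ≤ (1/2) * ∫ y in (0:ℝ)..1, |ψ y| := by
  have h1 : |∫ y in (0:ℝ)..1, KK x y * ψ y| ≤ ∫ y in (0:ℝ)..1, |KK x y * ψ y| := by
    exact intervalIntegral.abs_integral_le_integral_abs zero_le_one
  refine h1.trans ?_
  have : (1/2) * ∫ y in (0:ℝ)..1, |ψ y| = ∫ y in (0:ℝ)..1, (1/2) * |ψ y| := by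
    rw [intervalIntegral.integral_const_mul]
  rw [this]
  apply intervalIntegral.integral_mono_on zero_le_one ((KKint_y x hψ).abs)
    (((continuous_const.mul hψ.abs)).intervalIntegrable 0 1)
  intro y hy
  rw [abs_mul]
  apply mul_le_mul_of_nonneg_right (KK_bound hx hy) (abs_nonneg _)

-- product integrability
lemma integrable_prod_bdd {F : ℝ × ℝ → ℝ} {s t : Set ℝ} (hs : MeasurableSet s)
    (ht : MeasurableSet t) (hμs : volume s ≠ ⊤) (hμt : volume t ≠ ⊤)
    (hm : AEStronglyMeasurable F ((volume.restrict s).prod (volume.restrict t)))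
    {C : ℝ} (hb : ∀ p : ℝ × ℝ, p.1 ∈ s → p.2 ∈ t → |F p| ≤ C) :
    Integrable F ((volume.restrict s).prod (volume.restrict t)) := by
  haveI : IsFiniteMeasure (volume.restrict s) :=
    ⟨by rwa [Measure.restrict_apply_univ, lt_top_iff_ne_top]⟩
  haveI : IsFiniteMeasure (volume.restrict t) :=
    ⟨by rwa [Measure.restrict_apply_univ, lt_top_iff_ne_top]⟩
  apply Integrable.mono' (integrable_const C) hm
  rw [MeasureTheory.Measure.prod_restrict]
  apply MeasureTheory.ae_restrict_of_forall_mem (hs.prod ht)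
  rintro ⟨x, y⟩ ⟨hxs, hyt⟩
  simpa [Real.norm_eq_abs] using hb (x, y) hxs hyt

-- the xy Fubini
lemma fub_x {φ ψ : ℝ → ℝ} (hφ : Continuous φ) (hψ : Continuous ψ) :
    ∫ x in (0:ℝ)..1, φ x * (∫ y in (0:ℝ)..1, KK x y * ψ y)
      = ∫ y in (0:ℝ)..1, (∫ x in (0:ℝ)..1, φ x * KK x y) * ψ y := by
  obtain ⟨Cφ, hCφ⟩ := (isCompact_Icc (a := (0:ℝ)) (b := 1)).exists_bound_of_continuousOn
    hφ.continuousOn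
  obtain ⟨Cψ, hCψ⟩ := (isCompact_Icc (a := (0:ℝ)) (b := 1)).exists_bound_of_continuousOn
    hψ.continuousOn
  have e1 : ∀ x : ℝ, φ x * (∫ y in (0:ℝ)..1, KK x y * ψ y)
      = ∫ y in (0:ℝ)..1, φ x * (KK x y * ψ y) := by
    intro x; rw [intervalIntegral.integral_const_mul]
  have e2 : ∀ y : ℝ, (∫ x in (0:ℝ)..1, φ x * KK x y) * ψ y
      = ∫ x in (0:ℝ)..1, φ x * (KK x y * ψ y) := by
    intro y
    rw [← intervalIntegral.integral_mul_const]
    congr 1; funext x; ring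
  simp only [e1, e2]
  rw [intervalIntegral.integral_of_le zero_le_one, intervalIntegral.integral_of_le zero_le_one]
  have e3 : ∀ x : ℝ, (∫ y in (0:ℝ)..1, φ x * (KK x y * ψ y))
      = ∫ y in Ioc (0:ℝ) 1, φ x * (KK x y * ψ y) := fun x =>
    intervalIntegral.integral_of_le zero_le_one
  have e4 : ∀ y : ℝ, (∫ x in (0:ℝ)..1, φ x * (KK x y * ψ y))
      = ∫ x in Ioc (0:ℝ) 1, φ x * (KK x y * ψ y) := fun y =>
    intervalIntegral.integral_of_le zero_le_one
  simp only [e3, e4]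
  apply MeasureTheory.integral_integral_swap
  apply integrable_prod_bdd measurableSet_Ioc measurableSet_Ioc
    (by simp) (by simp)
    ((hφ.measurable.comp measurable_fst).mul
      (KK_meas.mul (hψ.measurable.comp measurable_snd))).aestronglyMeasurable
    (C := Cφ * ((1/2) * Cψ))
  rintro ⟨x, y⟩ hx hy
  have hx' : x ∈ Icc (0:ℝ) 1 := ⟨le_of_lt hx.1, hx.2⟩
  have hy' : y ∈ Icc (0:ℝ) 1 := ⟨le_of_lt hy.1, hy.2⟩
  have b1 : |φ x| ≤ Cφ := by simpa [Real.norm_eq_abs] using hCφ x hx'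
  have b2 : |ψ y| ≤ Cψ := by simpa [Real.norm_eq_abs] using hCψ y hy'
  have b3 := KK_bound hx' hy'
  calc |φ x * (KK x y * ψ y)| = |φ x| * (|KK x y| * |ψ y|) := by
        rw [abs_mul, abs_mul]
    _ ≤ Cφ * ((1/2) * Cψ) := by
        apply mul_le_mul b1 _ (by positivity) ((abs_nonneg _).trans b1)
        apply mul_le_mul b3 b2 (abs_nonneg _) (by linarith [(abs_nonneg (φ x)).trans b1, b3])

-- helper: interval-integrability over [0,1] of (continuous) * (S-type parametric integral)
lemma intInt_mul_S {φ ψ : ℝ → ℝ} (hφ : Continuous φ) (hψ : Continuous ψ) :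
    IntervalIntegrable (fun x => φ x * (∫ y in (0:ℝ)..1, KK x y * ψ y)) volume 0 1 := by
  obtain ⟨Cφ, hCφ⟩ := (isCompact_Icc (a := (0:ℝ)) (b := 1)).exists_bound_of_continuousOn
    hφ.continuousOn
  apply intInt_of_bdd zero_le_one (C := Cφ * ((1/2) * ∫ y in (0:ℝ)..1, |ψ y|))
  · exact hφ.measurable.mul (S_meas hψ)
  · intro x hx
    have hx' : x ∈ Icc (0:ℝ) 1 := ⟨le_of_lt hx.1, hx.2⟩
    have b1 : |φ x| ≤ Cφ := by simpa [Real.norm_eq_abs] using hCφ x hx'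
    have b2 := S_bound hψ hx'
    calc |φ x * (∫ y in (0:ℝ)..1, KK x y * ψ y)|
        = |φ x| * |∫ y in (0:ℝ)..1, KK x y * ψ y| := abs_mul _ _
      _ ≤ Cφ * ((1/2) * ∫ y in (0:ℝ)..1, |ψ y|) :=
          mul_le_mul b1 b2 (abs_nonneg _) ((abs_nonneg _).trans b1)

theorem stepA
    (f11 f12 f21 f22 G1 G2 : ℝ → ℝ → ℝ)
    (h11 : ContDiff ℝ (⊤ : ℕ∞) (fun p : ℝ × ℝ => f11 p.1 p.2))
    (h12 : ContDiff ℝ (⊤ : ℕ∞) (fun p : ℝ × ℝ => f12 p.1 p.2))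
    (h21 : ContDiff ℝ (⊤ : ℕ∞) (fun p : ℝ × ℝ => f21 p.1 p.2))
    (h22 : ContDiff ℝ (⊤ : ℕ∞) (fun p : ℝ × ℝ => f22 p.1 p.2))
    (hG1 : ContDiff ℝ (⊤ : ℕ∞) (fun p : ℝ × ℝ => G1 p.1 p.2))
    (hG2 : ContDiff ℝ (⊤ : ℕ∞) (fun p : ℝ × ℝ => G2 p.1 p.2))
    (hper12 : ∀ t, f12 t 1 = f12 t 0)
    (hper22 : ∀ t, f22 t 1 = f22 t 0)
    (t : ℝ) :
    ∫ x in (0:ℝ)..1, (∫ y in (0:ℝ)..1, KK x y *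
        ((G1 t x - deriv (f12 t) x) * f21 t y + f11 t x * (G2 t y + deriv (f22 t) y)))
    = (∫ x in (0:ℝ)..1, (f11 t x * f22 t x + f12 t x * f21 t x))
      - ((∫ x in (0:ℝ)..1, f11 t x) * (∫ x in (0:ℝ)..1, f22 t x)
         + (∫ x in (0:ℝ)..1, f12 t x) * (∫ x in (0:ℝ)..1, f21 t x))
      + (∫ x in (0:ℝ)..1, G1 t x * (∫ y in (0:ℝ)..1, KK x y * f21 t y))
      + (∫ x in (0:ℝ)..1, f11 t x * (∫ y in (0:ℝ)..1, KK x y * G2 t y)) := by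
  have c11 : Continuous (f11 t) := (slice2 h11 t).continuous
  have c12 : Continuous (f12 t) := (slice2 h12 t).continuous
  have c21 : Continuous (f21 t) := (slice2 h21 t).continuous
  have c22 : Continuous (f22 t) := (slice2 h22 t).continuous
  have cg1 : Continuous (G1 t) := (slice2 hG1 t).continuous
  have cg2 : Continuous (G2 t) := (slice2 hG2 t).continuous
  have cd12 : Continuous (deriv (f12 t)) := (slice2 h12 t).continuous_deriv (by simp)
  have cd22 : Continuous (deriv (f22 t)) := (slice2 h22 t).continuous_deriv (by simp)
  set S : ℝ → ℝ := fun x => ∫ y in (0:ℝ)..1, KK x y * f21 t y with hS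
  set W : ℝ → ℝ := fun x => ∫ y in (0:ℝ)..1, KK x y * G2 t y with hW
  set m22 : ℝ := ∫ y in (0:ℝ)..1, f22 t y with hm22
  -- step 1 : rewrite the inner integral for x ∈ [0,1]
  have step1 : ∫ x in (0:ℝ)..1, (∫ y in (0:ℝ)..1, KK x y *
        ((G1 t x - deriv (f12 t) x) * f21 t y + f11 t x * (G2 t y + deriv (f22 t) y)))
      = ∫ x in (0:ℝ)..1, (G1 t x * S x - deriv (f12 t) x * S x + f11 t x * W x
          + f11 t x * f22 t x - f11 t x * m22) := by
    apply intervalIntegral.integral_congr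
    intro x hx
    rw [Set.uIcc_of_le zero_le_one] at hx
    have e0 : (fun y => KK x y * ((G1 t x - deriv (f12 t) x) * f21 t y
          + f11 t x * (G2 t y + deriv (f22 t) y)))
        = fun y => (G1 t x - deriv (f12 t) x) * (KK x y * f21 t y)
          + f11 t x * (KK x y * (G2 t y + deriv (f22 t) y)) := by
      funext y; ring
    show (∫ y in (0:ℝ)..1, KK x y * ((G1 t x - deriv (f12 t) x) * f21 t y
          + f11 t x * (G2 t y + deriv (f22 t) y))) = _
    rw [e0]
    rw [intervalIntegral.integral_add
      ((KKint_y x c21).const_mul _)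
      ((KKint_y x (show Continuous (fun y => G2 t y + deriv (f22 t) y) from cg2.add cd22)).const_mul _)]
    rw [intervalIntegral.integral_const_mul, intervalIntegral.integral_const_mul]
    have e1 : (fun y => KK x y * (G2 t y + deriv (f22 t) y))
        = fun y => KK x y * G2 t y + KK x y * deriv (f22 t) y := by
      funext y; ring
    rw [e1, intervalIntegral.integral_add (KKint_y x cg2) (KKint_y x cd22)]
    rw [kernel_parts_y (slice2 h22 t) (hper22 t) hx]
    show (G1 t x - deriv (f12 t) x) * S x + f11 t x * (W x + (f22 t x - m22)) = _
    ring
  rw [step1]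
  -- step 2 : split the x-integral
  have i1 : IntervalIntegrable (fun x => G1 t x * S x) volume 0 1 := intInt_mul_S cg1 c21
  have i2 : IntervalIntegrable (fun x => deriv (f12 t) x * S x) volume 0 1 :=
    intInt_mul_S cd12 c21
  have i3 : IntervalIntegrable (fun x => f11 t x * W x) volume 0 1 := intInt_mul_S c11 cg2
  have i4 : IntervalIntegrable (fun x => f11 t x * f22 t x) volume 0 1 :=
    (c11.mul c22).intervalIntegrable 0 1
  have i5 : IntervalIntegrable (fun x => f11 t x * m22) volume 0 1 :=
    (c11.mul continuous_const).intervalIntegrable 0 1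
  have split : ∫ x in (0:ℝ)..1, (G1 t x * S x - deriv (f12 t) x * S x + f11 t x * W x
          + f11 t x * f22 t x - f11 t x * m22)
      = (∫ x in (0:ℝ)..1, G1 t x * S x) - (∫ x in (0:ℝ)..1, deriv (f12 t) x * S x)
        + (∫ x in (0:ℝ)..1, f11 t x * W x) + (∫ x in (0:ℝ)..1, f11 t x * f22 t x)
        - (∫ x in (0:ℝ)..1, f11 t x * m22) := by
    rw [intervalIntegral.integral_sub (((i1.sub i2).add i3).add i4) i5,
        intervalIntegral.integral_add ((i1.sub i2).add i3) i4,
        intervalIntegral.integral_add (i1.sub i2) i3,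
        intervalIntegral.integral_sub i1 i2]
  rw [split]
  -- step 3 : the Fubini term
  have fub := fub_x cd12 c21
  have e2 : ∫ y in (0:ℝ)..1, (∫ x in (0:ℝ)..1, deriv (f12 t) x * KK x y) * f21 t y
      = ∫ y in (0:ℝ)..1, ((∫ x in (0:ℝ)..1, f12 t x) * f21 t y - f12 t y * f21 t y) := by
    apply intervalIntegral.integral_congr
    intro y hy
    rw [Set.uIcc_of_le zero_le_one] at hy
    show (∫ x in (0:ℝ)..1, deriv (f12 t) x * KK x y) * f21 t y = _
    rw [kernel_parts_x (slice2 h12 t) (hper12 t) hy]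
    ring
  have e3 : ∫ y in (0:ℝ)..1, ((∫ x in (0:ℝ)..1, f12 t x) * f21 t y - f12 t y * f21 t y)
      = (∫ x in (0:ℝ)..1, f12 t x) * (∫ y in (0:ℝ)..1, f21 t y)
        - ∫ y in (0:ℝ)..1, f12 t y * f21 t y := by
    rw [intervalIntegral.integral_sub ((c21.intervalIntegrable 0 1).const_mul _)
      ((show Continuous (fun y => f12 t y * f21 t y) from c12.mul c21).intervalIntegrable 0 1)]
    rw [intervalIntegral.integral_const_mul]
  have key2 : ∫ x in (0:ℝ)..1, deriv (f12 t) x * S x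
      = (∫ x in (0:ℝ)..1, f12 t x) * (∫ y in (0:ℝ)..1, f21 t y)
        - ∫ y in (0:ℝ)..1, f12 t y * f21 t y := by
    rw [hS]; rw [fub, e2, e3]
  rw [key2]
  -- step 4 : the mean term
  have key3 : ∫ x in (0:ℝ)..1, f11 t x * m22
      = (∫ x in (0:ℝ)..1, f11 t x) * m22 := by
    rw [intervalIntegral.integral_mul_const]
  rw [key3]
  -- step 5 : combine
  have key4 : ∫ x in (0:ℝ)..1, (f11 t x * f22 t x + f12 t x * f21 t x)
      = (∫ x in (0:ℝ)..1, f11 t x * f22 t x) + (∫ x in (0:ℝ)..1, f12 t x * f21 t x) :=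
    intervalIntegral.integral_add i4 ((c12.mul c21).intervalIntegrable 0 1)
  rw [key4, hm22]
  ring

set_option maxHeartbeats 1000000 in
theorem stepB
    (T : ℝ) (hT : 0 ≤ T)
    (f11 f12 f21 f22 G1 G2 : ℝ → ℝ → ℝ)
    (h11 : ContDiff ℝ (⊤ : ℕ∞) (fun p : ℝ × ℝ => f11 p.1 p.2))
    (h12 : ContDiff ℝ (⊤ : ℕ∞) (fun p : ℝ × ℝ => f12 p.1 p.2))
    (h21 : ContDiff ℝ (⊤ : ℕ∞) (fun p : ℝ × ℝ => f21 p.1 p.2))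
    (h22 : ContDiff ℝ (⊤ : ℕ∞) (fun p : ℝ × ℝ => f22 p.1 p.2))
    (hG1 : ContDiff ℝ (⊤ : ℕ∞) (fun p : ℝ × ℝ => G1 p.1 p.2))
    (hG2 : ContDiff ℝ (⊤ : ℕ∞) (fun p : ℝ × ℝ => G2 p.1 p.2))
    (hd1 : ∀ t x, deriv (fun s => f11 s x) t = G1 t x - deriv (f12 t) x)
    (hd2 : ∀ t y, deriv (fun s => f21 s y) t = G2 t y + deriv (f22 t) y) :
    ∫ t in (0:ℝ)..T, (∫ x in (0:ℝ)..1, (∫ y in (0:ℝ)..1, KK x y *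
        ((G1 t x - deriv (f12 t) x) * f21 t y + f11 t x * (G2 t y + deriv (f22 t) y))))
    = (∫ x in (0:ℝ)..1, f11 T x * (∫ y in (0:ℝ)..1, KK x y * f21 T y))
      - (∫ x in (0:ℝ)..1, f11 0 x * (∫ y in (0:ℝ)..1, KK x y * f21 0 y)) := by
  -- abbreviation for the h function
  set h : ℝ → ℝ → ℝ → ℝ := fun t x y =>
    (G1 t x - deriv (f12 t) x) * f21 t y + f11 t x * (G2 t y + deriv (f22 t) y) with hh
  -- joint continuity of h
  have contH : Continuous (fun p : ℝ × ℝ × ℝ => h p.1 p.2.1 p.2.2) := by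
    rw [hh]
    have c1 : Continuous (fun p : ℝ × ℝ × ℝ => G1 p.1 p.2.1) :=
      hG1.continuous.comp (continuous_fst.prodMk (continuous_fst.comp continuous_snd))
    have c2 : Continuous (fun p : ℝ × ℝ × ℝ => deriv (f12 p.1) p.2.1) :=
      (cont_deriv2 h12).comp (continuous_fst.prodMk (continuous_fst.comp continuous_snd))
    have c3 : Continuous (fun p : ℝ × ℝ × ℝ => f21 p.1 p.2.2) :=
      h21.continuous.comp (continuous_fst.prodMk (continuous_snd.comp continuous_snd))
    have c4 : Continuous (fun p : ℝ × ℝ × ℝ => f11 p.1 p.2.1) :=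
      h11.continuous.comp (continuous_fst.prodMk (continuous_fst.comp continuous_snd))
    have c5 : Continuous (fun p : ℝ × ℝ × ℝ => G2 p.1 p.2.2) :=
      hG2.continuous.comp (continuous_fst.prodMk (continuous_snd.comp continuous_snd))
    have c6 : Continuous (fun p : ℝ × ℝ × ℝ => deriv (f22 p.1) p.2.2) :=
      (cont_deriv2 h22).comp (continuous_fst.prodMk (continuous_snd.comp continuous_snd))
    exact ((c1.sub c2).mul c3).add (c4.mul (c5.add c6))
  -- uniform bound for h on the box
  obtain ⟨Ch, hCh⟩ := ((isCompact_Icc (a := (0:ℝ)) (b := T)).prod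
    ((isCompact_Icc (a := (0:ℝ)) (b := 1)).prod
      (isCompact_Icc (a := (0:ℝ)) (b := 1)))).exists_bound_of_continuousOn
    contH.continuousOn
  have hbd : ∀ t x y : ℝ, t ∈ Icc (0:ℝ) T → x ∈ Icc (0:ℝ) 1 → y ∈ Icc (0:ℝ) 1 →
      |h t x y| ≤ Ch := by
    intro t x y ht hx hy
    simpa [Real.norm_eq_abs] using hCh (t, x, y) ⟨ht, hx, hy⟩
  have hCh0 : 0 ≤ Ch := le_trans (abs_nonneg _)
    (hbd 0 0 0 (by constructor <;> simp [hT]) (by norm_num) (by norm_num))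
  -- FTC in time, pointwise in (x, y)
  have ftc : ∀ x y : ℝ, (∫ t in (0:ℝ)..T, h t x y)
      = f11 T x * f21 T y - f11 0 x * f21 0 y := by
    intro x y
    have hder : ∀ t ∈ uIcc (0:ℝ) T, HasDerivAt (fun s => f11 s x * f21 s y) (h t x y) t := by
      intro t _
      have H1 : HasDerivAt (fun s => f11 s x) (deriv (fun s => f11 s x) t) t :=
        ((slice1 h11 x).differentiable (by simp) t).hasDerivAt
      have H2 : HasDerivAt (fun s => f21 s y) (deriv (fun s => f21 s y) t) t :=
        ((slice1 h21 y).differentiable (by simp) t).hasDerivAt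
      have := H1.mul H2
      show HasDerivAt (fun s => f11 s x * f21 s y)
        ((G1 t x - deriv (f12 t) x) * f21 t y + f11 t x * (G2 t y + deriv (f22 t) y)) t
      rw [← hd1 t x, ← hd2 t y]
      exact this
    have hcont : Continuous (fun t => h t x y) :=
      contH.comp (continuous_id.prodMk (continuous_const.prodMk continuous_const))
    exact intervalIntegral.integral_eq_sub_of_hasDerivAt hder (hcont.intervalIntegrable 0 T)
  -- pulling constants inside the kernel integral
  have pull : ∀ t x : ℝ, f11 t x * (∫ y in (0:ℝ)..1, KK x y * f21 t y)
      = ∫ y in (0:ℝ)..1, KK x y * (f11 t x * f21 t y) := by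
    intro t x
    rw [← intervalIntegral.integral_const_mul]
    congr 1; funext y; ring
  have iQ : ∀ t : ℝ, IntervalIntegrable
      (fun x => ∫ y in (0:ℝ)..1, KK x y * (f11 t x * f21 t y)) volume 0 1 := by
    intro t
    have : (fun x => ∫ y in (0:ℝ)..1, KK x y * (f11 t x * f21 t y))
        = fun x => f11 t x * (∫ y in (0:ℝ)..1, KK x y * f21 t y) :=
      funext (fun x => (pull t x).symm)
    rw [this]
    exact intInt_mul_S (slice2 h11 t).continuous (slice2 h21 t).continuous
  have rhs1 : (∫ x in (0:ℝ)..1, f11 T x * (∫ y in (0:ℝ)..1, KK x y * f21 T y))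
      - (∫ x in (0:ℝ)..1, f11 0 x * (∫ y in (0:ℝ)..1, KK x y * f21 0 y))
      = ∫ x in (0:ℝ)..1, (∫ y in (0:ℝ)..1, (∫ t in (0:ℝ)..T, KK x y * h t x y)) := by
    simp only [pull]
    rw [← intervalIntegral.integral_sub (iQ T) (iQ 0)]
    apply intervalIntegral.integral_congr
    intro x _
    show (∫ y in (0:ℝ)..1, KK x y * (f11 T x * f21 T y))
        - (∫ y in (0:ℝ)..1, KK x y * (f11 0 x * f21 0 y)) = _
    rw [← intervalIntegral.integral_sub
      (KKint_y x (show Continuous (fun y => f11 T x * f21 T y) from continuous_const.mul (slice2 h21 T).continuous))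
      (KKint_y x (show Continuous (fun y => f11 0 x * f21 0 y) from continuous_const.mul (slice2 h21 0).continuous))]
    apply intervalIntegral.integral_congr
    intro y _
    show KK x y * (f11 T x * f21 T y) - KK x y * (f11 0 x * f21 0 y)
        = ∫ t in (0:ℝ)..T, KK x y * h t x y
    rw [intervalIntegral.integral_const_mul, ftc x y]
    ring
  -- now the Fubini swaps, in set-integral form
  have hIoc1 : (Ioc (0:ℝ) 1) ⊆ Icc (0:ℝ) 1 := Ioc_subset_Icc_self
  have hIocT : (Ioc (0:ℝ) T) ⊆ Icc (0:ℝ) T := Ioc_subset_Icc_self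
  have measF : Measurable (fun q : (ℝ × ℝ) × ℝ => KK q.1.1 q.2 * h q.1.2 q.1.1 q.2) := by
    apply Measurable.mul
    · exact KK_meas.comp ((measurable_fst.comp measurable_fst).prodMk measurable_snd)
    · exact contH.measurable.comp ((measurable_snd.comp measurable_fst).prodMk
        (((measurable_fst.comp measurable_fst)).prodMk measurable_snd))
  have boundF : ∀ t x y : ℝ, t ∈ Icc (0:ℝ) T → x ∈ Icc (0:ℝ) 1 → y ∈ Icc (0:ℝ) 1 →
      |KK x y * h t x y| ≤ (1/2) * Ch := by
    intro t x y ht hx hy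
    rw [abs_mul]
    exact mul_le_mul (KK_bound hx hy) (hbd t x y ht hx hy) (abs_nonneg _) (by norm_num)
  -- swap (y, t) for fixed x
  have swap1 : ∀ x ∈ Icc (0:ℝ) 1,
      (∫ y in Ioc (0:ℝ) 1, ∫ t in Ioc (0:ℝ) T, KK x y * h t x y)
      = ∫ t in Ioc (0:ℝ) T, ∫ y in Ioc (0:ℝ) 1, KK x y * h t x y := by
    intro x hx
    apply MeasureTheory.integral_integral_swap
    have hmeas : Measurable (fun p : ℝ × ℝ => KK x p.1 * h p.2 x p.1) :=
      (KK_meas.comp (measurable_const.prodMk measurable_fst)).mul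
        (contH.measurable.comp (measurable_snd.prodMk
          (measurable_const.prodMk measurable_fst)))
    apply integrable_prod_bdd measurableSet_Ioc measurableSet_Ioc (by simp) (by simp)
      hmeas.aestronglyMeasurable (C := (1/2) * Ch)
    rintro ⟨y, t⟩ hy ht
    exact boundF t x y (hIocT ht) hx (hIoc1 hy)
  -- swap (x, t)
  have measZ : AEStronglyMeasurable
      (fun p : ℝ × ℝ => ∫ y in Ioc (0:ℝ) 1, KK p.1 y * h p.2 p.1 y)
      ((volume.restrict (Ioc (0:ℝ) 1)).prod (volume.restrict (Ioc (0:ℝ) T))) := by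
    exact (MeasureTheory.StronglyMeasurable.integral_prod_right'
      (f := fun q : (ℝ × ℝ) × ℝ => KK q.1.1 q.2 * h q.1.2 q.1.1 q.2)
      measF.stronglyMeasurable).aestronglyMeasurable
  have boundZ : ∀ p : ℝ × ℝ, p.1 ∈ Ioc (0:ℝ) 1 → p.2 ∈ Ioc (0:ℝ) T →
      |∫ y in Ioc (0:ℝ) 1, KK p.1 y * h p.2 p.1 y| ≤ (1/2) * Ch := by
    rintro ⟨x, t⟩ hx ht
    have : ‖∫ y in Ioc (0:ℝ) 1, KK x y * h t x y‖
        ≤ ((1/2) * Ch) * ((volume.restrict (Ioc (0:ℝ) 1)) univ).toReal := by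
      apply MeasureTheory.norm_integral_le_of_norm_le_const
      apply MeasureTheory.ae_restrict_of_forall_mem measurableSet_Ioc
      intro y hy
      rw [Real.norm_eq_abs]
      exact boundF t x y (hIocT ht) (hIoc1 hx) (hIoc1 hy)
    simpa [Measure.restrict_apply_univ, Real.volume_Ioc, Real.norm_eq_abs] using this
  have swap2 : (∫ x in Ioc (0:ℝ) 1, ∫ t in Ioc (0:ℝ) T,
        ∫ y in Ioc (0:ℝ) 1, KK x y * h t x y)
      = ∫ t in Ioc (0:ℝ) T, ∫ x in Ioc (0:ℝ) 1,
        ∫ y in Ioc (0:ℝ) 1, KK x y * h t x y := by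
    apply MeasureTheory.integral_integral_swap
    exact integrable_prod_bdd measurableSet_Ioc measurableSet_Ioc (by simp) (by simp)
      measZ boundZ
  -- convert everything to set integrals and chain
  have convT : ∀ g : ℝ → ℝ, (∫ t in (0:ℝ)..T, g t) = ∫ t in Ioc (0:ℝ) T, g t :=
    fun g => intervalIntegral.integral_of_le hT
  have conv1 : ∀ g : ℝ → ℝ, (∫ u in (0:ℝ)..1, g u) = ∫ u in Ioc (0:ℝ) 1, g u :=
    fun g => intervalIntegral.integral_of_le zero_le_one
  rw [rhs1]
  simp only [convT, conv1]
  have e : (∫ x in Ioc (0:ℝ) 1, ∫ y in Ioc (0:ℝ) 1, ∫ t in Ioc (0:ℝ) T, KK x y * h t x y)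
      = ∫ x in Ioc (0:ℝ) 1, ∫ t in Ioc (0:ℝ) T, ∫ y in Ioc (0:ℝ) 1, KK x y * h t x y :=
    setIntegral_congr_fun measurableSet_Ioc (fun x hx => swap1 x (hIoc1 hx))
  rw [e, swap2]

-- |Q|-type bound
lemma Q_bound {φ ψ : ℝ → ℝ} (hφ : Continuous φ) (hψ : Continuous ψ) :
    |∫ x in (0:ℝ)..1, φ x * (∫ y in (0:ℝ)..1, KK x y * ψ y)|
      ≤ (1/2) * (∫ x in (0:ℝ)..1, |φ x|) * (∫ y in (0:ℝ)..1, |ψ y|) := by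
  have h1 : |∫ x in (0:ℝ)..1, φ x * (∫ y in (0:ℝ)..1, KK x y * ψ y)|
      ≤ ∫ x in (0:ℝ)..1, |φ x * (∫ y in (0:ℝ)..1, KK x y * ψ y)| :=
    intervalIntegral.abs_integral_le_integral_abs zero_le_one
  refine h1.trans ?_
  have h2 : ∫ x in (0:ℝ)..1, |φ x * (∫ y in (0:ℝ)..1, KK x y * ψ y)|
      ≤ ∫ x in (0:ℝ)..1, |φ x| * ((1/2) * ∫ y in (0:ℝ)..1, |ψ y|) := by
    apply intervalIntegral.integral_mono_on zero_le_one ((intInt_mul_S hφ hψ).abs)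
      ((hφ.abs.mul continuous_const).intervalIntegrable 0 1)
    intro x hx
    rw [abs_mul]
    exact mul_le_mul_of_nonneg_left (S_bound hψ hx) (abs_nonneg _)
  refine h2.trans ?_
  rw [intervalIntegral.integral_mul_const]
  apply le_of_eq; ring

-- measurability of t ↦ ∫ x in 0..1, F t x for jointly measurable F
lemma param_meas {F : ℝ → ℝ → ℝ} (hm : Measurable (fun p : ℝ × ℝ => F p.1 p.2)) :
    Measurable (fun t => ∫ x in (0:ℝ)..1, F t x) := by
  have he : (fun t => ∫ x in (0:ℝ)..1, F t x)
      = fun t => ∫ x in Ioc (0:ℝ) 1, F t x := by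
    funext t; exact intervalIntegral.integral_of_le zero_le_one
  rw [he]
  exact (MeasureTheory.StronglyMeasurable.integral_prod_right'
    (f := fun p : ℝ × ℝ => F p.1 p.2) hm.stronglyMeasurable).measurable

-- bound for parametric integral
lemma param_bound {F : ℝ → ℝ → ℝ} {C : ℝ} (t : ℝ)
    (hb : ∀ x ∈ Ioc (0:ℝ) 1, |F t x| ≤ C) :
    |∫ x in (0:ℝ)..1, F t x| ≤ C := by
  rw [intervalIntegral.integral_of_le zero_le_one]
  have : ‖∫ x in Ioc (0:ℝ) 1, F t x‖
      ≤ C * ((volume.restrict (Ioc (0:ℝ) 1)) univ).toReal := by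
    apply MeasureTheory.norm_integral_le_of_norm_le_const
    apply MeasureTheory.ae_restrict_of_forall_mem measurableSet_Ioc
    intro x hx; rw [Real.norm_eq_abs]; exact hb x hx
  simpa [Measure.restrict_apply_univ, Real.volume_Ioc, Real.norm_eq_abs] using this

-- interval-integrability in t of a parametric integral, continuous integrand
lemma intInt_param {F : ℝ → ℝ → ℝ} {T : ℝ} (hT : 0 ≤ T)
    (hc : Continuous (fun p : ℝ × ℝ => F p.1 p.2)) :
    IntervalIntegrable (fun t => ∫ x in (0:ℝ)..1, F t x) volume 0 T := by
  obtain ⟨C, hC⟩ := ((isCompact_Icc (a := (0:ℝ)) (b := T)).prod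
    (isCompact_Icc (a := (0:ℝ)) (b := 1))).exists_bound_of_continuousOn hc.continuousOn
  apply intInt_of_bdd hT (param_meas hc.measurable) (C := C)
  intro t ht
  apply param_bound
  intro x hx
  simpa [Real.norm_eq_abs] using
    hC (t, x) ⟨Ioc_subset_Icc_self ht, Ioc_subset_Icc_self hx⟩

set_option maxHeartbeats 2000000 in
theorem stmt_3 :
    ∃ C : ℝ, 0 < C ∧ ∀ (T : ℝ), 0 < T →
      ∀ (f11 f12 f21 f22 G1 G2 : ℝ → ℝ → ℝ),
      ContDiff ℝ (⊤ : ℕ∞) (fun p : ℝ × ℝ => f11 p.1 p.2) →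
      ContDiff ℝ (⊤ : ℕ∞) (fun p : ℝ × ℝ => f12 p.1 p.2) →
      ContDiff ℝ (⊤ : ℕ∞) (fun p : ℝ × ℝ => f21 p.1 p.2) →
      ContDiff ℝ (⊤ : ℕ∞) (fun p : ℝ × ℝ => f22 p.1 p.2) →
      ContDiff ℝ (⊤ : ℕ∞) (fun p : ℝ × ℝ => G1 p.1 p.2) →
      ContDiff ℝ (⊤ : ℕ∞) (fun p : ℝ × ℝ => G2 p.1 p.2) →
      (∀ t x : ℝ, f11 t (x+1) = f11 t x ∧ f12 t (x+1) = f12 t x ∧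
        f21 t (x+1) = f21 t x ∧ f22 t (x+1) = f22 t x ∧
        G1 t (x+1) = G1 t x ∧ G2 t (x+1) = G2 t x) →
      (∀ t x : ℝ, deriv (fun s => f11 s x) t + deriv (fun y => f12 t y) x = G1 t x) →
      (∀ t x : ℝ, deriv (fun s => f21 s x) t - deriv (fun y => f22 t y) x = G2 t x) →
      (∫ t in (0:ℝ)..T, ∫ x in (0:ℝ)..1, (f11 t x * f22 t x + f12 t x * f21 t x)) ≤
        C * (((∫ x in (0:ℝ)..1, |f11 0 x|)
                + (⨆ t ∈ Set.Icc (0:ℝ) T, ∫ x in (0:ℝ)..1, |f11 t x|)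
                + ∫ t in (0:ℝ)..T, ∫ x in (0:ℝ)..1, |G1 t x|)
              * ((∫ x in (0:ℝ)..1, |f21 0 x|)
                + (⨆ t ∈ Set.Icc (0:ℝ) T, ∫ x in (0:ℝ)..1, |f21 t x|)
                + ∫ t in (0:ℝ)..T, ∫ x in (0:ℝ)..1, |G2 t x|)
            + ∫ t in (0:ℝ)..T,
                ((∫ x in (0:ℝ)..1, f11 t x) * (∫ x in (0:ℝ)..1, f22 t x)
                  + (∫ x in (0:ℝ)..1, f12 t x) * (∫ x in (0:ℝ)..1, f21 t x))) := by
  refine ⟨1, one_pos, ?_⟩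
  intro T hT f11 f12 f21 f22 G1 G2 h11 h12 h21 h22 hG1 hG2 hper hpde1 hpde2
  have hT' : (0:ℝ) ≤ T := hT.le
  -- periodicity facts
  have hper12 : ∀ t, f12 t 1 = f12 t 0 := by
    intro t; have := (hper t 0).2.1; simpa using this
  have hper22 : ∀ t, f22 t 1 = f22 t 0 := by
    intro t; have := (hper t 0).2.2.2.1; simpa using this
  -- derivative identities
  have hd1 : ∀ t x, deriv (fun s => f11 s x) t = G1 t x - deriv (f12 t) x := by
    intro t x; have := hpde1 t x; have h : deriv (fun y => f12 t y) x = deriv (f12 t) x := rfl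
    linarith [this]
  have hd2 : ∀ t y, deriv (fun s => f21 s y) t = G2 t y + deriv (f22 t) y := by
    intro t y; have := hpde2 t y; linarith [this]
  -- uniform bounds on the box
  obtain ⟨C11, hC11⟩ := ((isCompact_Icc (a := (0:ℝ)) (b := T)).prod
    (isCompact_Icc (a := (0:ℝ)) (b := 1))).exists_bound_of_continuousOn
    h11.continuous.continuousOn
  obtain ⟨C12, hC12⟩ := ((isCompact_Icc (a := (0:ℝ)) (b := T)).prod
    (isCompact_Icc (a := (0:ℝ)) (b := 1))).exists_bound_of_continuousOn
    h12.continuous.continuousOn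
  obtain ⟨C21, hC21⟩ := ((isCompact_Icc (a := (0:ℝ)) (b := T)).prod
    (isCompact_Icc (a := (0:ℝ)) (b := 1))).exists_bound_of_continuousOn
    h21.continuous.continuousOn
  obtain ⟨C22, hC22⟩ := ((isCompact_Icc (a := (0:ℝ)) (b := T)).prod
    (isCompact_Icc (a := (0:ℝ)) (b := 1))).exists_bound_of_continuousOn
    h22.continuous.continuousOn
  obtain ⟨CG1, hCG1⟩ := ((isCompact_Icc (a := (0:ℝ)) (b := T)).prod
    (isCompact_Icc (a := (0:ℝ)) (b := 1))).exists_bound_of_continuousOn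
    hG1.continuous.continuousOn
  obtain ⟨CG2, hCG2⟩ := ((isCompact_Icc (a := (0:ℝ)) (b := T)).prod
    (isCompact_Icc (a := (0:ℝ)) (b := 1))).exists_bound_of_continuousOn
    hG2.continuous.continuousOn
  -- abbreviations (as plain defs to keep syntactic forms)
  -- integral bounds on slices, t ∈ Icc 0 T
  have bN1 : ∀ t ∈ Icc (0:ℝ) T, (∫ x in (0:ℝ)..1, |f11 t x|) ≤ C11 := by
    intro t ht
    have : abs (∫ x in (0:ℝ)..1, |f11 t x|) ≤ C11 := by
      apply param_bound (F := fun t x => |f11 t x|)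
      intro x hx
      rw [abs_abs]
      simpa [Real.norm_eq_abs] using hC11 (t, x) ⟨ht, Ioc_subset_Icc_self hx⟩
    exact (le_abs_self _).trans this
  have bN2 : ∀ t ∈ Icc (0:ℝ) T, (∫ x in (0:ℝ)..1, |f21 t x|) ≤ C21 := by
    intro t ht
    have : abs (∫ x in (0:ℝ)..1, |f21 t x|) ≤ C21 := by
      apply param_bound (F := fun t x => |f21 t x|)
      intro x hx
      rw [abs_abs]
      simpa [Real.norm_eq_abs] using hC21 (t, x) ⟨ht, Ioc_subset_Icc_self hx⟩
    exact (le_abs_self _).trans this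
  have nonnegN1 : ∀ t : ℝ, 0 ≤ ∫ x in (0:ℝ)..1, |f11 t x| := by
    intro t
    apply intervalIntegral.integral_nonneg zero_le_one
    intro x _; exact abs_nonneg _
  have nonnegN2 : ∀ t : ℝ, 0 ≤ ∫ x in (0:ℝ)..1, |f21 t x| := by
    intro t
    apply intervalIntegral.integral_nonneg zero_le_one
    intro x _; exact abs_nonneg _
  have nonnegG1 : ∀ t : ℝ, 0 ≤ ∫ x in (0:ℝ)..1, |G1 t x| := by
    intro t
    apply intervalIntegral.integral_nonneg zero_le_one
    intro x _; exact abs_nonneg _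
  have nonnegG2 : ∀ t : ℝ, 0 ≤ ∫ x in (0:ℝ)..1, |G2 t x| := by
    intro t
    apply intervalIntegral.integral_nonneg zero_le_one
    intro x _; exact abs_nonneg _
  have bG1 : ∀ t ∈ Icc (0:ℝ) T, (∫ x in (0:ℝ)..1, |G1 t x|) ≤ CG1 := by
    intro t ht
    have : abs (∫ x in (0:ℝ)..1, |G1 t x|) ≤ CG1 := by
      apply param_bound (F := fun t x => |G1 t x|)
      intro x hx
      rw [abs_abs]
      simpa [Real.norm_eq_abs] using hCG1 (t, x) ⟨ht, Ioc_subset_Icc_self hx⟩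
    exact (le_abs_self _).trans this
  have bG2 : ∀ t ∈ Icc (0:ℝ) T, (∫ x in (0:ℝ)..1, |G2 t x|) ≤ CG2 := by
    intro t ht
    have : abs (∫ x in (0:ℝ)..1, |G2 t x|) ≤ CG2 := by
      apply param_bound (F := fun t x => |G2 t x|)
      intro x hx
      rw [abs_abs]
      simpa [Real.norm_eq_abs] using hCG2 (t, x) ⟨ht, Ioc_subset_Icc_self hx⟩
    exact (le_abs_self _).trans this
  -- sup facts
  have sup_facts : ∀ (N : ℝ → ℝ) (C : ℝ), (∀ t ∈ Icc (0:ℝ) T, N t ≤ C) →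
      ∀ t ∈ Icc (0:ℝ) T, N t ≤ ⨆ t ∈ Icc (0:ℝ) T, N t := by
    intro N C hC t ht
    have hb : BddAbove (range fun t => ⨆ _ : t ∈ Icc (0:ℝ) T, N t) := by
      refine ⟨max C 0, ?_⟩
      rintro _ ⟨u, rfl⟩
      dsimp only
      by_cases h : u ∈ Icc (0:ℝ) T
      · rw [ciSup_pos h]; exact le_max_of_le_left (hC u h)
      · haveI : IsEmpty (u ∈ Icc (0:ℝ) T) := by simpa using h
        rw [Real.iSup_of_isEmpty]
        exact le_max_right _ _
    have := le_ciSup hb t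
    rw [ciSup_pos ht] at this
    exact this
  have h0mem : (0:ℝ) ∈ Icc (0:ℝ) T := ⟨le_refl 0, hT'⟩
  have hTmem : T ∈ Icc (0:ℝ) T := ⟨hT', le_refl T⟩
  have sf1 := sup_facts (fun t => ∫ x in (0:ℝ)..1, |f11 t x|) C11 bN1
  have sf2 := sup_facts (fun t => ∫ x in (0:ℝ)..1, |f21 t x|) C21 bN2
  have hn1 : (0:ℝ) ≤ ⨆ t ∈ Icc (0:ℝ) T, ∫ x in (0:ℝ)..1, |f11 t x| :=
    (nonnegN1 0).trans (sf1 0 h0mem)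
  have hn2 : (0:ℝ) ≤ ⨆ t ∈ Icc (0:ℝ) T, ∫ x in (0:ℝ)..1, |f21 t x| :=
    (nonnegN2 0).trans (sf2 0 h0mem)
  -- the time-integrated identity
  have idB := stepB T hT' f11 f12 f21 f22 G1 G2 h11 h12 h21 h22 hG1 hG2 hd1 hd2
  have key : (∫ t in (0:ℝ)..T,
      ((∫ x in (0:ℝ)..1, (f11 t x * f22 t x + f12 t x * f21 t x))
        - ((∫ x in (0:ℝ)..1, f11 t x) * (∫ x in (0:ℝ)..1, f22 t x)
           + (∫ x in (0:ℝ)..1, f12 t x) * (∫ x in (0:ℝ)..1, f21 t x))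
        + (∫ x in (0:ℝ)..1, G1 t x * (∫ y in (0:ℝ)..1, KK x y * f21 t y))
        + (∫ x in (0:ℝ)..1, f11 t x * (∫ y in (0:ℝ)..1, KK x y * G2 t y))))
      = (∫ x in (0:ℝ)..1, f11 T x * (∫ y in (0:ℝ)..1, KK x y * f21 T y))
        - (∫ x in (0:ℝ)..1, f11 0 x * (∫ y in (0:ℝ)..1, KK x y * f21 0 y)) := by
    rw [← idB]
    apply intervalIntegral.integral_congr
    intro t _
    exact (stepA f11 f12 f21 f22 G1 G2 h11 h12 h21 h22 hG1 hG2 hper12 hper22 t).symm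
  -- integrability in time of the four pieces
  have iD : IntervalIntegrable (fun t => ∫ x in (0:ℝ)..1,
      (f11 t x * f22 t x + f12 t x * f21 t x)) volume 0 T :=
    intInt_param hT' ((h11.continuous.mul h22.continuous).add
      (h12.continuous.mul h21.continuous))
  have hC11nn : (0:ℝ) ≤ C11 := le_trans (norm_nonneg _)
    (hC11 (0, 0) ⟨h0mem, by norm_num⟩)
  have hC21nn : (0:ℝ) ≤ C21 := le_trans (norm_nonneg _)
    (hC21 (0, 0) ⟨h0mem, by norm_num⟩)
  have hC12nn : (0:ℝ) ≤ C12 := le_trans (norm_nonneg _)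
    (hC12 (0, 0) ⟨h0mem, by norm_num⟩)
  have hC22nn : (0:ℝ) ≤ C22 := le_trans (norm_nonneg _)
    (hC22 (0, 0) ⟨h0mem, by norm_num⟩)
  have im : IntervalIntegrable (fun t =>
      (∫ x in (0:ℝ)..1, f11 t x) * (∫ x in (0:ℝ)..1, f22 t x)
        + (∫ x in (0:ℝ)..1, f12 t x) * (∫ x in (0:ℝ)..1, f21 t x)) volume 0 T := by
    apply intInt_of_bdd hT' (C := C11 * C22 + C12 * C21)
    · exact ((param_meas h11.continuous.measurable).mul
        (param_meas h22.continuous.measurable)).add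
        ((param_meas h12.continuous.measurable).mul
          (param_meas h21.continuous.measurable))
    · intro t ht
      have ht' := Ioc_subset_Icc_self ht
      have b11 : |∫ x in (0:ℝ)..1, f11 t x| ≤ C11 := param_bound (F := f11) t
        (fun x hx => by
          simpa [Real.norm_eq_abs] using hC11 (t, x) ⟨ht', Ioc_subset_Icc_self hx⟩)
      have b22 : |∫ x in (0:ℝ)..1, f22 t x| ≤ C22 := param_bound (F := f22) t
        (fun x hx => by
          simpa [Real.norm_eq_abs] using hC22 (t, x) ⟨ht', Ioc_subset_Icc_self hx⟩)
      have b12 : |∫ x in (0:ℝ)..1, f12 t x| ≤ C12 := param_bound (F := f12) t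
        (fun x hx => by
          simpa [Real.norm_eq_abs] using hC12 (t, x) ⟨ht', Ioc_subset_Icc_self hx⟩)
      have b21 : |∫ x in (0:ℝ)..1, f21 t x| ≤ C21 := param_bound (F := f21) t
        (fun x hx => by
          simpa [Real.norm_eq_abs] using hC21 (t, x) ⟨ht', Ioc_subset_Icc_self hx⟩)
      calc |(∫ x in (0:ℝ)..1, f11 t x) * (∫ x in (0:ℝ)..1, f22 t x)
            + (∫ x in (0:ℝ)..1, f12 t x) * (∫ x in (0:ℝ)..1, f21 t x)|
          ≤ |(∫ x in (0:ℝ)..1, f11 t x) * (∫ x in (0:ℝ)..1, f22 t x)|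
            + |(∫ x in (0:ℝ)..1, f12 t x) * (∫ x in (0:ℝ)..1, f21 t x)| := abs_add_le _ _
        _ ≤ C11 * C22 + C12 * C21 := by
            rw [abs_mul, abs_mul]
            gcongr <;> first | exact abs_nonneg _ | assumption
  have iE1 : IntervalIntegrable (fun t => ∫ x in (0:ℝ)..1,
      G1 t x * (∫ y in (0:ℝ)..1, KK x y * f21 t y)) volume 0 T := by
    apply intInt_of_bdd hT' (C := (1/2) * CG1 * C21)
    · apply param_meas (F := fun t x => G1 t x * (∫ y in (0:ℝ)..1, KK x y * f21 t y))
      have he : (fun p : ℝ × ℝ => G1 p.1 p.2 * (∫ y in (0:ℝ)..1, KK p.2 y * f21 p.1 y))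
          = fun p : ℝ × ℝ => G1 p.1 p.2 * (∫ y in Ioc (0:ℝ) 1, KK p.2 y * f21 p.1 y) := by
        funext p; rw [intervalIntegral.integral_of_le zero_le_one]
      rw [he]
      apply hG1.continuous.measurable.mul
      exact (MeasureTheory.StronglyMeasurable.integral_prod_right'
        (f := fun q : (ℝ × ℝ) × ℝ => KK q.1.2 q.2 * f21 q.1.1 q.2)
        (((KK_meas.comp ((measurable_snd.comp measurable_fst).prodMk measurable_snd)).mul
          (h21.continuous.measurable.comp
            ((measurable_fst.comp measurable_fst).prodMk
              measurable_snd))).stronglyMeasurable)).measurable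
    · intro t ht
      have ht' := Ioc_subset_Icc_self ht
      refine (Q_bound (slice2 hG1 t).continuous (slice2 h21 t).continuous).trans ?_
      have := bG1 t ht'
      have := bN2 t ht'
      nlinarith [nonnegG1 t, nonnegN2 t]
  have iE2 : IntervalIntegrable (fun t => ∫ x in (0:ℝ)..1,
      f11 t x * (∫ y in (0:ℝ)..1, KK x y * G2 t y)) volume 0 T := by
    apply intInt_of_bdd hT' (C := (1/2) * C11 * CG2)
    · apply param_meas (F := fun t x => f11 t x * (∫ y in (0:ℝ)..1, KK x y * G2 t y))
      have he : (fun p : ℝ × ℝ => f11 p.1 p.2 * (∫ y in (0:ℝ)..1, KK p.2 y * G2 p.1 y))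
          = fun p : ℝ × ℝ => f11 p.1 p.2 * (∫ y in Ioc (0:ℝ) 1, KK p.2 y * G2 p.1 y) := by
        funext p; rw [intervalIntegral.integral_of_le zero_le_one]
      rw [he]
      apply h11.continuous.measurable.mul
      exact (MeasureTheory.StronglyMeasurable.integral_prod_right'
        (f := fun q : (ℝ × ℝ) × ℝ => KK q.1.2 q.2 * G2 q.1.1 q.2)
        (((KK_meas.comp ((measurable_snd.comp measurable_fst).prodMk measurable_snd)).mul
          (hG2.continuous.measurable.comp
            ((measurable_fst.comp measurable_fst).prodMk
              measurable_snd))).stronglyMeasurable)).measurable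
    · intro t ht
      have ht' := Ioc_subset_Icc_self ht
      refine (Q_bound (slice2 h11 t).continuous (slice2 hG2 t).continuous).trans ?_
      have := bN1 t ht'
      have := bG2 t ht'
      have : abs (∫ x in (0:ℝ)..1, |G2 t x|) ≤ CG2 := abs_le.mpr
        ⟨by linarith [nonnegG2 t], bG2 t ht'⟩
      nlinarith [nonnegG2 t, nonnegN1 t, bN1 t ht', bG2 t ht']
  -- split the integral
  have split : (∫ t in (0:ℝ)..T,
      ((∫ x in (0:ℝ)..1, (f11 t x * f22 t x + f12 t x * f21 t x))
        - ((∫ x in (0:ℝ)..1, f11 t x) * (∫ x in (0:ℝ)..1, f22 t x)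
           + (∫ x in (0:ℝ)..1, f12 t x) * (∫ x in (0:ℝ)..1, f21 t x))
        + (∫ x in (0:ℝ)..1, G1 t x * (∫ y in (0:ℝ)..1, KK x y * f21 t y))
        + (∫ x in (0:ℝ)..1, f11 t x * (∫ y in (0:ℝ)..1, KK x y * G2 t y))))
      = (∫ t in (0:ℝ)..T, ∫ x in (0:ℝ)..1, (f11 t x * f22 t x + f12 t x * f21 t x))
        - (∫ t in (0:ℝ)..T, ((∫ x in (0:ℝ)..1, f11 t x) * (∫ x in (0:ℝ)..1, f22 t x)
           + (∫ x in (0:ℝ)..1, f12 t x) * (∫ x in (0:ℝ)..1, f21 t x)))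
        + (∫ t in (0:ℝ)..T, ∫ x in (0:ℝ)..1, G1 t x * (∫ y in (0:ℝ)..1, KK x y * f21 t y))
        + (∫ t in (0:ℝ)..T, ∫ x in (0:ℝ)..1, f11 t x * (∫ y in (0:ℝ)..1, KK x y * G2 t y)) := by
    rw [intervalIntegral.integral_add ((iD.sub im).add iE1) iE2,
        intervalIntegral.integral_add (iD.sub im) iE1,
        intervalIntegral.integral_sub iD im]
  -- bounds on the boundary terms
  have bQT : |∫ x in (0:ℝ)..1, f11 T x * (∫ y in (0:ℝ)..1, KK x y * f21 T y)|
      ≤ (1/2) * (∫ x in (0:ℝ)..1, |f11 T x|) * (∫ y in (0:ℝ)..1, |f21 T y|) :=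
    Q_bound (slice2 h11 T).continuous (slice2 h21 T).continuous
  have bQ0 : |∫ x in (0:ℝ)..1, f11 0 x * (∫ y in (0:ℝ)..1, KK x y * f21 0 y)|
      ≤ (1/2) * (∫ x in (0:ℝ)..1, |f11 0 x|) * (∫ y in (0:ℝ)..1, |f21 0 y|) :=
    Q_bound (slice2 h11 0).continuous (slice2 h21 0).continuous
  -- bounds on the error terms
  have babsE1 : |∫ t in (0:ℝ)..T, ∫ x in (0:ℝ)..1,
        G1 t x * (∫ y in (0:ℝ)..1, KK x y * f21 t y)|
      ≤ ((1/2) * (⨆ t ∈ Icc (0:ℝ) T, ∫ x in (0:ℝ)..1, |f21 t x|))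
        * (∫ t in (0:ℝ)..T, ∫ x in (0:ℝ)..1, |G1 t x|) := by
    refine (intervalIntegral.abs_integral_le_integral_abs hT').trans ?_
    have hmaj : IntervalIntegrable (fun t =>
        ((1/2) * (⨆ t ∈ Icc (0:ℝ) T, ∫ x in (0:ℝ)..1, |f21 t x|))
          * (∫ x in (0:ℝ)..1, |G1 t x|)) volume 0 T :=
      (intInt_param hT' hG1.continuous.abs).const_mul _
    have step : (∫ t in (0:ℝ)..T, |∫ x in (0:ℝ)..1,
          G1 t x * (∫ y in (0:ℝ)..1, KK x y * f21 t y)|)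
        ≤ ∫ t in (0:ℝ)..T, ((1/2) * (⨆ t ∈ Icc (0:ℝ) T, ∫ x in (0:ℝ)..1, |f21 t x|))
          * (∫ x in (0:ℝ)..1, |G1 t x|) := by
      apply intervalIntegral.integral_mono_on hT' iE1.abs hmaj
      intro t ht
      refine (Q_bound (slice2 hG1 t).continuous (slice2 h21 t).continuous).trans ?_
      have h1 := sf2 t ht
      have h2 := nonnegG1 t
      have h3 := nonnegN2 t
      nlinarith
    refine step.trans ?_
    rw [intervalIntegral.integral_const_mul]
  have babsE2 : |∫ t in (0:ℝ)..T, ∫ x in (0:ℝ)..1,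
        f11 t x * (∫ y in (0:ℝ)..1, KK x y * G2 t y)|
      ≤ ((1/2) * (⨆ t ∈ Icc (0:ℝ) T, ∫ x in (0:ℝ)..1, |f11 t x|))
        * (∫ t in (0:ℝ)..T, ∫ x in (0:ℝ)..1, |G2 t x|) := by
    refine (intervalIntegral.abs_integral_le_integral_abs hT').trans ?_
    have hmaj : IntervalIntegrable (fun t =>
        ((1/2) * (⨆ t ∈ Icc (0:ℝ) T, ∫ x in (0:ℝ)..1, |f11 t x|))
          * (∫ x in (0:ℝ)..1, |G2 t x|)) volume 0 T :=
      (intInt_param hT' hG2.continuous.abs).const_mul _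
    have step : (∫ t in (0:ℝ)..T, |∫ x in (0:ℝ)..1,
          f11 t x * (∫ y in (0:ℝ)..1, KK x y * G2 t y)|)
        ≤ ∫ t in (0:ℝ)..T, ((1/2) * (⨆ t ∈ Icc (0:ℝ) T, ∫ x in (0:ℝ)..1, |f11 t x|))
          * (∫ x in (0:ℝ)..1, |G2 t x|) := by
      apply intervalIntegral.integral_mono_on hT' iE2.abs hmaj
      intro t ht
      refine (Q_bound (slice2 h11 t).continuous (slice2 hG2 t).continuous).trans ?_
      have h1 := sf1 t ht
      have h2 := nonnegG2 t
      have h3 := nonnegN1 t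
      nlinarith
    refine step.trans ?_
    rw [intervalIntegral.integral_const_mul]
  -- final arithmetic
  rw [one_mul]
  have hg1 : (0:ℝ) ≤ ∫ t in (0:ℝ)..T, ∫ x in (0:ℝ)..1, |G1 t x| :=
    intervalIntegral.integral_nonneg hT' (fun t _ => nonnegG1 t)
  have hg2 : (0:ℝ) ≤ ∫ t in (0:ℝ)..T, ∫ x in (0:ℝ)..1, |G2 t x| :=
    intervalIntegral.integral_nonneg hT' (fun t _ => nonnegG2 t)
  have hNT1 := sf1 T hTmem
  have hNT2 := sf2 T hTmem
  have hN01 := sf1 0 h0mem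
  have hN02 := sf2 0 h0mem
  have pT : (∫ x in (0:ℝ)..1, |f11 T x|) * (∫ x in (0:ℝ)..1, |f21 T x|)
      ≤ (⨆ t ∈ Icc (0:ℝ) T, ∫ x in (0:ℝ)..1, |f11 t x|)
        * (⨆ t ∈ Icc (0:ℝ) T, ∫ x in (0:ℝ)..1, |f21 t x|) :=
    mul_le_mul hNT1 hNT2 (nonnegN2 T) hn1
  have habs1 := abs_le.mp bQT
  have habs2 := abs_le.mp bQ0
  have habsE1' := abs_le.mp babsE1
  have habsE2' := abs_le.mp babsE2
  have final := key
  rw [split] at final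
  -- final : ∫D - ∫m + ∫E1 + ∫E2 = QT - Q0
  nlinarith [mul_nonneg (nonnegN1 0) (nonnegN2 0), mul_nonneg hn1 hn2,
    mul_nonneg (nonnegN1 0) hn2, mul_nonneg hn1 (nonnegN2 0),
    mul_nonneg (nonnegN1 0) hg2, mul_nonneg hn1 hg2,
    mul_nonneg hg1 (nonnegN2 0), mul_nonneg hg1 hn2, mul_nonneg hg1 hg2,
    mul_le_mul hN01 hN02 (nonnegN2 0) hn1]
end

section
/- Let f : ℝ → ℝ be a C¹ function of period 1. Then ∫₀¹ f(x)⁴ dx ≤ C (‖f'‖_{L²[0,1]} ‖f‖_{L²[0,1]}³ + ‖f‖_{L²[0,1]}⁴) for some universal constant C > 0. -/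
/-!
Pick a point `y ∈ [a, b]` where `f ^ 2` is at most its mean. Then for every `x`,
`f x ^ 2 ≤ f y ^ 2 + ∫ |(f ^ 2)'| ≤ (∫ f ^ 2) / (b - a) + 2 ‖f‖₂ ‖f'‖₂` by Cauchy–Schwarz, and
`∫ f ^ 4 ≤ (sup f ^ 2) ∫ f ^ 2`. On `[0, 1]` this gives the bound with `C = 2`.
-/

open intervalIntegral MeasureTheory Set

theorem integral_abs_mul_le_sqrt_mul_sqrt {α : Type*} [MeasurableSpace α] {μ : Measure α}
    {f g : α → ℝ} (hf : MemLp f 2 μ) (hg : MemLp g 2 μ) :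
    ∫ x, |f x * g x| ∂μ ≤ √(∫ x, f x ^ 2 ∂μ) * √(∫ x, g x ^ 2 ∂μ) := by
  have holder := integral_mul_le_Lp_mul_Lq_of_nonneg Real.HolderConjugate.two_two
    (ae_of_all _ fun x => abs_nonneg (f x)) (ae_of_all _ fun x => abs_nonneg (g x))
    (by rw [ENNReal.ofReal_ofNat]; exact hf.abs) (by rw [ENNReal.ofReal_ofNat]; exact hg.abs)
  simpa [abs_mul, Real.sqrt_eq_rpow, Real.rpow_two] using holder

theorem intervalIntegral.integral_abs_mul_le_sqrt_mul_sqrt {f g : ℝ → ℝ} {a b : ℝ} (hab : a ≤ b)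
    (hf : Continuous f) (hg : Continuous g) :
    ∫ x in a..b, |f x * g x| ≤ √(∫ x in a..b, f x ^ 2) * √(∫ x in a..b, g x ^ 2) := by
  have memLp_two {h : ℝ → ℝ} (hh : Continuous h) : MemLp h 2 (volume.restrict (Ioc a b)) :=
    (memLp_two_iff_integrable_sq hh.aestronglyMeasurable).2 (hh.pow 2).integrableOn_Ioc
  simpa only [integral_of_le hab] using
    _root_.integral_abs_mul_le_sqrt_mul_sqrt (memLp_two hf) (memLp_two hg)

theorem exists_mem_Icc_mul_le_integral {g : ℝ → ℝ} {a b : ℝ} (hab : a ≤ b)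
    (hg : ContinuousOn g (Icc a b)) : ∃ y ∈ Icc a b, (b - a) * g y ≤ ∫ x in a..b, g x := by
  obtain ⟨y, hy, hmin⟩ := isCompact_Icc.exists_isMinOn (nonempty_Icc.2 hab) hg
  refine ⟨y, hy, ?_⟩
  simpa using integral_mono_on hab intervalIntegrable_const
    (hg.intervalIntegrable_of_Icc (μ := volume) hab) fun x hx => hmin hx

theorem sub_le_integral_abs_of_hasDerivAt {g g' : ℝ → ℝ} {a b x y : ℝ}
    (hderiv : ∀ u ∈ Icc a b, HasDerivAt g (g' u) u) (hint : IntervalIntegrable g' volume a b)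
    (hx : x ∈ Icc a b) (hy : y ∈ Icc a b) : g x - g y ≤ ∫ u in a..b, |g' u| := by
  have hab : a ≤ b := hx.1.trans hx.2
  have hsub : uIcc y x ⊆ Icc a b := by
    rw [← uIcc_of_le hab]
    exact uIcc_subset_uIcc (Icc_subset_uIcc hy) (Icc_subset_uIcc hx)
  calc g x - g y = ∫ u in y..x, g' u :=
        (integral_eq_sub_of_hasDerivAt (fun u hu => hderiv u (hsub hu))
          (hint.mono_set (by rwa [uIcc_of_le hab]))).symm
    _ ≤ ‖∫ u in y..x, g' u‖ := le_abs_self _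
    _ ≤ |∫ u in y..x, ‖g' u‖| := norm_integral_le_abs_integral_norm
    _ ≤ |∫ u in a..b, ‖g' u‖| :=
        abs_integral_mono_interval (uIoc_subset_uIoc_of_uIcc_subset_uIcc (by rwa [uIcc_of_le hab]))
          (ae_of_all _ fun _ => norm_nonneg _) hint.norm
    _ = ∫ u in a..b, |g' u| := abs_of_nonneg (integral_nonneg hab fun _ _ => norm_nonneg _)

theorem mul_sq_le_integral_sq_add_sqrt_mul_sqrt {f : ℝ → ℝ} (hf : ContDiff ℝ 1 f)
    {a b x : ℝ} (hx : x ∈ Icc a b) :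
    (b - a) * f x ^ 2 ≤ (∫ u in a..b, f u ^ 2) +
      2 * (b - a) * (√(∫ u in a..b, f u ^ 2) * √(∫ u in a..b, deriv f u ^ 2)) := by
  have hab : a ≤ b := hx.1.trans hx.2
  have hf' : Continuous (deriv f) := hf.continuous_deriv le_rfl
  have hderiv (u : ℝ) : HasDerivAt (fun u => f u ^ 2) (2 * (f u * deriv f u)) u := by
    simpa [mul_assoc] using (hf.differentiable one_ne_zero u).hasDerivAt.fun_pow 2
  have hcont : Continuous fun u => 2 * (f u * deriv f u) :=
    continuous_const.mul (hf.continuous.mul hf')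
  obtain ⟨y, hy, hmean⟩ :=
    exists_mem_Icc_mul_le_integral (g := fun u => f u ^ 2) hab (hf.continuous.pow 2).continuousOn
  have hosc := sub_le_integral_abs_of_hasDerivAt (fun u _ => hderiv u) (hcont.intervalIntegrable a b)
    hx hy
  simp only [abs_mul (2 : ℝ), abs_two, intervalIntegral.integral_const_mul] at hosc
  have hCS := integral_abs_mul_le_sqrt_mul_sqrt hab hf.continuous hf'
  linarith [mul_le_mul_of_nonneg_left hosc (sub_nonneg.2 hab),
    mul_le_mul_of_nonneg_left hCS (sub_nonneg.2 hab)]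

theorem mul_integral_pow_four_le_mul_integral_sq {f : ℝ → ℝ} (hf : Continuous f) {a b M : ℝ}
    (hab : a ≤ b) (hM : ∀ x ∈ Icc a b, (b - a) * f x ^ 2 ≤ M) :
    (b - a) * ∫ x in a..b, f x ^ 4 ≤ M * ∫ x in a..b, f x ^ 2 := by
  rw [← intervalIntegral.integral_const_mul, ← intervalIntegral.integral_const_mul]
  refine integral_mono_on hab (((hf.pow 4).intervalIntegrable _ _).const_mul _)
    (((hf.pow 2).intervalIntegrable _ _).const_mul M) fun x hx => ?_
  nlinarith [hM x hx, sq_nonneg (f x)]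

theorem stmt_9 :
    ∃ C : ℝ, 0 < C ∧ ∀ f : ℝ → ℝ, ContDiff ℝ 1 f → (∀ x : ℝ, f (x + 1) = f x) →
      (∫ x in (0:ℝ)..1, (f x) ^ 4) ≤
        C * (Real.sqrt (∫ x in (0:ℝ)..1, (deriv f x) ^ 2)
              * (Real.sqrt (∫ x in (0:ℝ)..1, (f x) ^ 2)) ^ 3
            + (Real.sqrt (∫ x in (0:ℝ)..1, (f x) ^ 2)) ^ 4) := by
  refine ⟨2, two_pos, fun f hf _ => ?_⟩
  have hbound := mul_integral_pow_four_le_mul_integral_sq hf.continuous zero_le_one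
    fun x hx => mul_sq_le_integral_sq_add_sqrt_mul_sqrt hf hx
  have hA_nonneg : 0 ≤ ∫ x in (0:ℝ)..1, f x ^ 2 := integral_nonneg zero_le_one fun x _ => sq_nonneg (f x)
  simp only [sub_zero, one_mul] at hbound
  generalize (∫ x in (0:ℝ)..1, f x ^ 2) = A at *
  obtain ⟨s, hs, rfl⟩ : ∃ s, 0 ≤ s ∧ s ^ 2 = A := ⟨√A, Real.sqrt_nonneg A, Real.sq_sqrt hA_nonneg⟩
  rw [Real.sqrt_sq hs] at *
  nlinarith [Real.sqrt_nonneg (∫ x in (0:ℝ)..1, deriv f x ^ 2)]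
end

section
/- Let g : ℝ → ℝ be a C¹ nonnegative function of period 1. Then ∫₀¹ g(x)³ dx ≤ C (‖g'‖_{L²[0,1]}^{4/3} ‖g‖_{L¹[0,1]}^{5/3} + ‖g‖_{L¹[0,1]}³) for some universal constant C > 0. -/
/-!
Let `S = max g` and `m = ∫ g` on `[0, 1]`, so that `∫ g³ ≤ S² m`. Since `min g ≤ m`, integrating
`(g²)' = 2 g g'` between a minimum and a maximum point and using `2|g g'| ≤ ε g² + ε⁻¹ g'²` with
`∫ g² ≤ S m` gives `S² ≤ m² + ε S m + ε⁻¹ ‖g'‖₂²` for every `ε > 0`. Choosing `ε = S / (2m)` yields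
`S³ ≤ 2 m² S + 4 m ‖g'‖₂²`, so either `S ≲ m` or `S³ ≲ m ‖g'‖₂²`; in both cases `S² m` is bounded by
the right-hand side.
-/

open intervalIntegral Set
open MeasureTheory (volume setIntegral_mono_set)

lemma abs_two_mul_le_mul_sq_add_inv_mul_sq {ε : ℝ} (hε : 0 < ε) (a b : ℝ) :
    |2 * a * b| ≤ ε * a ^ 2 + ε⁻¹ * b ^ 2 := by
  rw [abs_mul, abs_mul, abs_two, ← sq_abs a, ← sq_abs b]
  have := sq_nonneg (ε * |a| - |b|)
  field_simp
  nlinarith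

lemma sq_le_of_cube_le {S x : ℝ} (hS : 0 ≤ S) (hx : 0 ≤ x) (h : S ^ 3 ≤ 8 * x) :
    S ^ 2 ≤ 4 * x ^ ((2 : ℝ) / 3) := by
  have hpow : ∀ y : ℝ, 0 ≤ y → (y ^ 3) ^ ((2 : ℝ) / 3) = y ^ 2 := fun y hy => by
    rw [← Real.rpow_natCast, ← Real.rpow_mul hy]; norm_num
  calc S ^ 2 = (S ^ 3) ^ ((2 : ℝ) / 3) := (hpow S hS).symm
    _ ≤ (8 * x) ^ ((2 : ℝ) / 3) := by gcongr
    _ = 4 * x ^ ((2 : ℝ) / 3) := by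
      rw [Real.mul_rpow (by norm_num) hx, show (8 : ℝ) = 2 ^ 3 by norm_num, hpow 2 (by norm_num)]
      norm_num

lemma cube_le_of_forall_pos {S m D : ℝ} (hS : 0 ≤ S) (hm : 0 < m) (hD : 0 ≤ D)
    (h : ∀ ε > 0, S ^ 2 ≤ m ^ 2 + ε * (S * m) + ε⁻¹ * D) :
    S ^ 3 ≤ 2 * m ^ 2 * S + 4 * m * D := by
  rcases hS.eq_or_lt with rfl | hS
  · norm_num
    positivity
  -- `ε = S / (2m)` makes the middle term `S² / 2`, which is absorbed by the left-hand side.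
  have hε := h (S / (2 * m)) (by positivity)
  rw [inv_div] at hε
  field_simp at hε
  nlinarith

lemma sq_mul_le_of_cube_le {S m D : ℝ} (hS : 0 ≤ S) (hm : 0 ≤ m) (hD : 0 ≤ D)
    (h : S ^ 3 ≤ 2 * m ^ 2 * S + 4 * m * D) :
    S ^ 2 * m ≤ 4 * (D ^ ((2 : ℝ) / 3) * m ^ ((5 : ℝ) / 3) + m ^ 3) := by
  have hD23 : 0 ≤ D ^ ((2 : ℝ) / 3) * m ^ ((5 : ℝ) / 3) := by positivity
  rcases le_total (4 * m * D) (2 * m ^ 2 * S) with hc | hc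
  · have : S ^ 2 ≤ 4 * m ^ 2 := by nlinarith
    nlinarith
  · have hS2 := sq_le_of_cube_le hS (by positivity) (by linarith : S ^ 3 ≤ 8 * (m * D))
    have hm53 : m ^ ((2 : ℝ) / 3) * m = m ^ ((5 : ℝ) / 3) := by
      rw [← Real.rpow_add_one' hm (by norm_num)]; norm_num
    calc S ^ 2 * m ≤ 4 * (m * D) ^ ((2 : ℝ) / 3) * m := by gcongr
      _ = 4 * (D ^ ((2 : ℝ) / 3) * m ^ ((5 : ℝ) / 3)) := by
        rw [Real.mul_rpow hm hD, ← hm53]; ring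
      _ ≤ _ := by linarith [pow_nonneg hm 3]

lemma sq_mul_le_of_forall_pos {S m D : ℝ} (hS : 0 ≤ S) (hm : 0 ≤ m) (hD : 0 ≤ D)
    (h : ∀ ε > 0, S ^ 2 ≤ m ^ 2 + ε * (S * m) + ε⁻¹ * D) :
    S ^ 2 * m ≤ 4 * (D ^ ((2 : ℝ) / 3) * m ^ ((5 : ℝ) / 3) + m ^ 3) := by
  rcases hm.eq_or_lt with rfl | hm
  · simp only [mul_zero]; positivity
  exact sq_mul_le_of_cube_le hS hm.le hD (cube_le_of_forall_pos hS hm hD h)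

lemma sub_le_integral_abs_deriv {f f' : ℝ → ℝ} {a b x y : ℝ}
    (hf : ∀ t ∈ Icc a b, HasDerivAt f (f' t) t) (hf' : IntervalIntegrable f' volume a b)
    (hx : x ∈ Icc a b) (hy : y ∈ Icc a b) :
    f y - f x ≤ ∫ t in a..b, |f' t| := by
  have hab : a ≤ b := hx.1.trans hx.2
  have hsub : uIcc x y ⊆ Icc a b := uIcc_subset_Icc hx hy
  rw [← integral_eq_sub_of_hasDerivAt (fun t ht => hf t (hsub ht))
    (hf'.mono_set (by rwa [uIcc_of_le hab]))]
  calc (∫ t in x..y, f' t) ≤ ‖∫ t in x..y, f' t‖ := Real.le_norm_self _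
    _ ≤ ∫ t in uIoc x y, ‖f' t‖ := norm_integral_le_integral_norm_uIoc
    _ ≤ ∫ t in Ioc a b, ‖f' t‖ :=
        setIntegral_mono_set ((intervalIntegrable_iff_integrableOn_Ioc_of_le hab).1 hf'.norm)
          (.of_forall fun _ => norm_nonneg _)
          (.of_forall (Ioc_subset_Ioc (le_min hx.1 hy.1) (max_le hx.2 hy.2)))
    _ = ∫ t in a..b, |f' t| := (integral_of_le hab).symm

lemma integral_pow_succ_le {g : ℝ → ℝ} {a b S : ℝ} (hab : a ≤ b) (hg : ContinuousOn g (Icc a b))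
    (hg0 : ∀ x ∈ Icc a b, 0 ≤ g x) (hgS : ∀ x ∈ Icc a b, g x ≤ S) (n : ℕ) :
    ∫ x in a..b, g x ^ (n + 1) ≤ S ^ n * ∫ x in a..b, g x := by
  have hgi : IntervalIntegrable g volume a b := hg.intervalIntegrable_of_Icc hab
  rw [← integral_const_mul]
  refine integral_mono_on hab ((hg.pow (n + 1)).intervalIntegrable_of_Icc hab)
    (hgi.const_mul _) fun x hx => ?_
  rw [pow_succ]
  exact mul_le_mul_of_nonneg_right (pow_le_pow_left₀ (hg0 x hx) (hgS x hx) n) (hg0 x hx)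

lemma integral_abs_two_mul_le {f u : ℝ → ℝ} {a b ε : ℝ} (hab : a ≤ b) (hε : 0 < ε)
    (hf : Continuous f) (hu : Continuous u) :
    ∫ x in a..b, |2 * f x * u x| ≤
      ε * (∫ x in a..b, f x ^ 2) + ε⁻¹ * ∫ x in a..b, u x ^ 2 := by
  have hf2 : IntervalIntegrable (fun x => ε * f x ^ 2) volume a b := by
    apply Continuous.intervalIntegrable; fun_prop
  have hu2 : IntervalIntegrable (fun x => ε⁻¹ * u x ^ 2) volume a b := by
    apply Continuous.intervalIntegrable; fun_prop
  rw [← integral_const_mul, ← integral_const_mul, ← integral_add hf2 hu2]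
  exact integral_mono_on hab (by apply Continuous.intervalIntegrable; fun_prop) (hf2.add hu2)
    fun x _ => abs_two_mul_le_mul_sq_add_inv_mul_sq hε _ _

lemma sq_sub_sq_le_of_contDiff {g : ℝ → ℝ} (hg : ContDiff ℝ 1 g) {a b x y ε : ℝ} (hε : 0 < ε)
    (hx : x ∈ Icc a b) (hy : y ∈ Icc a b) :
    g y ^ 2 - g x ^ 2 ≤
      ε * (∫ t in a..b, g t ^ 2) + ε⁻¹ * ∫ t in a..b, deriv g t ^ 2 := by
  have hg' : Continuous (deriv g) := hg.continuous_deriv le_rfl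
  have hsq : ∀ t ∈ Icc a b, HasDerivAt (fun s => g s ^ 2) (2 * g t * deriv g t) t := fun t _ => by
    simpa [mul_comm] using ((hg.differentiable one_ne_zero) t).hasDerivAt.fun_pow 2
  calc g y ^ 2 - g x ^ 2 ≤ ∫ t in a..b, |2 * g t * deriv g t| :=
        sub_le_integral_abs_deriv hsq (by apply Continuous.intervalIntegrable; fun_prop) hx hy
    _ ≤ _ := integral_abs_two_mul_le (hx.1.trans hx.2) hε hg.continuous hg'

theorem stmt_12 :
    ∃ C : ℝ, 0 < C ∧ ∀ g : ℝ → ℝ, ContDiff ℝ 1 g → (∀ x : ℝ, g (x + 1) = g x) →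
      (∀ x : ℝ, 0 ≤ g x) →
      (∫ x in (0:ℝ)..1, (g x) ^ 3) ≤
        C * ((Real.sqrt (∫ x in (0:ℝ)..1, (deriv g x) ^ 2)) ^ ((4:ℝ)/3)
              * (∫ x in (0:ℝ)..1, g x) ^ ((5:ℝ)/3)
            + (∫ x in (0:ℝ)..1, g x) ^ 3) := by
  refine ⟨4, by norm_num, fun g hg _ hg0 => ?_⟩
  have hgc : ContinuousOn g (Icc 0 1) := hg.continuous.continuousOn
  obtain ⟨x₀, hx₀, hmin⟩ := isCompact_Icc.exists_isMinOn (nonempty_Icc.2 zero_le_one) hgc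
  obtain ⟨x₁, hx₁, hmax⟩ := isCompact_Icc.exists_isMaxOn (nonempty_Icc.2 zero_le_one) hgc
  set m := ∫ x in (0:ℝ)..1, g x
  set D := ∫ x in (0:ℝ)..1, deriv g x ^ 2
  have hm : 0 ≤ m := integral_nonneg zero_le_one fun x _ => hg0 x
  have hD : 0 ≤ D := integral_nonneg zero_le_one fun x _ => sq_nonneg _
  have hx₀m : g x₀ ≤ m := by
    simpa using integral_mono_on (μ := volume) zero_le_one intervalIntegrable_const
      (hgc.intervalIntegrable_of_Icc zero_le_one) hmin
  have hpow (n : ℕ) : ∫ x in (0:ℝ)..1, g x ^ (n + 1) ≤ g x₁ ^ n * m :=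
    integral_pow_succ_le zero_le_one hgc (fun x _ => hg0 x) hmax n
  have hkey : ∀ ε > 0, g x₁ ^ 2 ≤ m ^ 2 + ε * (g x₁ * m) + ε⁻¹ * D := fun ε hε => by
    have hosc := sq_sub_sq_le_of_contDiff hg hε hx₀ hx₁
    have hx₀sq : g x₀ ^ 2 ≤ m ^ 2 := pow_le_pow_left₀ (hg0 x₀) hx₀m 2
    have hsq : ∫ x in (0:ℝ)..1, g x ^ 2 ≤ g x₁ * m := by simpa using hpow 1
    linarith [mul_le_mul_of_nonneg_left hsq hε.le]
  calc (∫ x in (0:ℝ)..1, g x ^ 3) ≤ g x₁ ^ 2 * m := hpow 2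
    _ ≤ 4 * (D ^ ((2 : ℝ) / 3) * m ^ ((5 : ℝ) / 3) + m ^ 3) :=
        sq_mul_le_of_forall_pos (hg0 x₁) hm hD hkey
    _ = _ := by rw [Real.sqrt_eq_rpow, ← Real.rpow_mul hD]; norm_num
end
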